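/- arXiv:1003.0562 — 5 statements merged into one kernel-verified Lean document; each statement's English description precedes it below -/
import Mathlib

section
/- Let (x_n) be a Benford sequence of real numbers. Then for every real α and every integer k with α·k ≠ 0, the sequence (α·x_n^k) is also Benford (for negative k, terms with x_n = 0 are interpreted via the convention 0^k := 0). -/
open Filter Topology MeasureTheory
open scoped Classical

/-- Decimal significand: for `x ≠ 0`, the unique `s ∈ [1,10)` with `|x| = 10^k * s`;
by convention `signif 0 = 0`. (Intended for nonnegative `x`.) -/
noncomputable def signif (x : ℝ) : ℝ :=
  if x = 0 then 0 else x / (10 : ℝ) ^ (⌊Real.logb 10 x⌋)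

/-- A sequence of reals is Benford (base 10). -/
def BenfordSeq (x : ℕ → ℝ) : Prop :=
  ∀ t : ℝ, 1 ≤ t → t < 10 →
    Tendsto (fun N : ℕ =>
        (((Finset.Icc 1 N).filter fun n => signif |x n| ≤ t).card : ℝ) / (N : ℝ))
      atTop (𝓝 (Real.logb 10 t))

/-- A sequence of reals is uniformly distributed modulo 1. -/
def UDMod1 (y : ℕ → ℝ) : Prop :=
  ∀ a b : ℝ, 0 ≤ a → a < b → b ≤ 1 →
    Tendsto (fun N : ℕ =>
        (((Finset.Icc 1 N).filter fun n => Int.fract (y n) ∈ Set.Ico a b).card : ℝ) / (N : ℝ))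
      atTop (𝓝 (b - a))

def EventuallyZero (x : ℕ → ℝ) : Prop := ∃ N : ℕ, ∀ n, N ≤ n → x n = 0

def RowStochastic {d : ℕ} (P : Matrix (Fin d) (Fin d) ℝ) : Prop :=
  (∀ i j, 0 ≤ P i j) ∧ ∀ i, ∑ j, P i j = 1

/-- Irreducible and aperiodic: some power has all entries strictly positive. -/
def Primitive {d : ℕ} (P : Matrix (Fin d) (Fin d) ℝ) : Prop :=
  ∃ m : ℕ, 0 < m ∧ ∀ i j, 0 < (P ^ m) i j

def MatrixBenford {d : ℕ} (P Pstar : Matrix (Fin d) (Fin d) ℝ) : Prop :=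
  ∀ i j,
    (BenfordSeq (fun n => (P ^ n) i j - Pstar i j) ∨
      EventuallyZero (fun n => (P ^ n) i j - Pstar i j)) ∧
    (BenfordSeq (fun n => (P ^ (n + 1)) i j - (P ^ n) i j) ∨
      EventuallyZero (fun n => (P ^ (n + 1)) i j - (P ^ n) i j))

/-- The set of eigenvalues of `P`, i.e. roots of its characteristic polynomial over `ℂ`. -/
noncomputable def spectrumC {d : ℕ} (P : Matrix (Fin d) (Fin d) ℝ) : Set ℂ :=
  {z | ((P.map (Complex.ofReal : ℝ → ℂ)).charpoly).IsRoot z}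

/-- The reals `1`, `L`, together with the elements of `T`, are rationally independent. -/
def RatIndepWith (L : ℝ) (T : Set ℝ) : Prop :=
  LinearIndependent ℚ
    (Sum.elim (fun _ : Unit => (1 : ℝ))
      (Sum.elim (fun _ : Unit => L) (fun t : T => (t : ℝ))))

def Nonresonant {d : ℕ} (P : Matrix (Fin d) (Fin d) ℝ) : Prop :=
  ∀ Λ : Set ℂ, Λ.Nonempty → Λ ⊆ {z ∈ spectrumC P | 0 ≤ z.im} \ {1} →
    ∀ L : ℝ, (∀ z ∈ Λ, ‖z‖ = L) →
      ({z ∈ Λ | z.im = 0}.Subsingleton ∧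
        RatIndepWith (Real.logb 10 L)
          (((fun z : ℂ => Complex.arg z / (2 * Real.pi)) '' Λ) \ {0, 1/2}))

/-! Since `signif r = 10 ^ fract (log₁₀ r)`, a sequence is Benford exactly when `log₁₀ |x n|`
is equidistributed modulo 1, and `log₁₀ |α x^k| = log₁₀ |α| + k log₁₀ |x|`. Equidistribution
modulo 1 is preserved by adding a constant (a rotation of the circle moves an arc to at most
two arcs) and by multiplying by a nonzero integer (for `k > 0` the condition `fract (k t) < u`
cuts `[0, 1)` into `k` intervals of length `u / k`; negation reflects arcs, up to endpoints of
density zero). The terms with `x n = 0`, where the logarithm identity fails, lie in the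
density-zero set where `fract (log₁₀ |x n|) = 0`. -/

noncomputable def partialDensity (s : Set ℕ) (N : ℕ) : ℝ :=
  ((Finset.Icc 1 N).filter (· ∈ s)).card / N

def HasDensity (s : Set ℕ) (c : ℝ) : Prop :=
  Tendsto (partialDensity s) atTop (𝓝 c)

section partialDensity

variable {s t : Set ℕ} (N : ℕ)

lemma partialDensity_nonneg : 0 ≤ partialDensity s N := by
  unfold partialDensity; positivity

lemma partialDensity_mono (h : s ⊆ t) : partialDensity s N ≤ partialDensity t N := by
  unfold partialDensity
  gcongr

lemma partialDensity_union_le :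
    partialDensity (s ∪ t) N ≤ partialDensity s N + partialDensity t N := by
  unfold partialDensity
  rw [← add_div]
  gcongr
  norm_cast
  refine (Finset.card_le_card fun n hn => ?_).trans (Finset.card_union_le _ _)
  simpa [Finset.mem_union, Finset.mem_filter, and_or_left] using hn

lemma partialDensity_union (h : Disjoint s t) :
    partialDensity (s ∪ t) N = partialDensity s N + partialDensity t N := by
  unfold partialDensity
  rw [← add_div, ← Nat.cast_add, ← Finset.card_union_of_disjoint]
  · congr 3; ext n; simp [and_or_left]
  · exact Finset.disjoint_filter.mpr fun n _ hs ht => Set.disjoint_left.mp h hs ht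

lemma partialDensity_diff (h : s ⊆ t) :
    partialDensity (t \ s) N = partialDensity t N - partialDensity s N := by
  have := partialDensity_union (s := s) (t := t \ s) N Set.disjoint_sdiff_right
  rw [Set.union_sdiff_cancel h] at this
  linarith

lemma partialDensity_univ (hN : 0 < N) : partialDensity Set.univ N = 1 := by
  unfold partialDensity
  simp only [Set.mem_univ, Finset.filter_true, Nat.card_Icc, add_tsub_cancel_right]
  exact div_self (by positivity)

end partialDensity

lemma hasDensity_empty : HasDensity ∅ 0 :=
  tendsto_const_nhds.congr fun N => by simp [partialDensity]

lemma hasDensity_univ : HasDensity Set.univ 1 :=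
  tendsto_const_nhds.congr' <|
    (eventually_gt_atTop 0).mono fun N hN => (partialDensity_univ N hN).symm

namespace HasDensity

variable {s t z : Set ℕ} {c d : ℝ}

lemma union (hs : HasDensity s c) (ht : HasDensity t d) (h : Disjoint s t) :
    HasDensity (s ∪ t) (c + d) :=
  (hs.add ht).congr fun N => (partialDensity_union N h).symm

lemma diff (ht : HasDensity t d) (hs : HasDensity s c) (h : s ⊆ t) :
    HasDensity (t \ s) (d - c) :=
  (ht.sub hs).congr fun N => (partialDensity_diff N h).symm

lemma biUnion {ι : Type*} {I : Finset ι} {s : ι → Set ℕ} {c : ι → ℝ}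
    (h : ∀ i ∈ I, HasDensity (s i) (c i)) (hd : (I : Set ι).PairwiseDisjoint s) :
    HasDensity (⋃ i ∈ I, s i) (∑ i ∈ I, c i) := by
  classical
  induction I using Finset.induction_on with
  | empty => simpa using hasDensity_empty
  | insert i I hi ih =>
    rw [Finset.coe_insert, Set.pairwiseDisjoint_insert] at hd
    rw [Finset.set_biUnion_insert, Finset.sum_insert hi]
    refine (h i (Finset.mem_insert_self _ _)).union
      (ih (fun j hj => h j (Finset.mem_insert_of_mem hj)) hd.1) ?_
    exact Set.disjoint_iUnion₂_right.2 fun j hj => hd.2 j hj fun hij => hi (hij ▸ hj)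

lemma congr_of_null (hs : HasDensity s c) (hz : HasDensity z 0)
    (hst : ∀ n ∉ z, n ∈ s ↔ n ∈ t) : HasDensity t c := by
  have hle : ∀ {s t : Set ℕ}, (∀ n ∉ z, n ∈ s ↔ n ∈ t) →
      ∀ N, partialDensity t N ≤ partialDensity s N + partialDensity z N := fun h N =>
    (partialDensity_mono N fun n hn => by
      by_cases hn' : n ∈ z
      exacts [Or.inr hn', Or.inl ((h n hn').2 hn)]).trans (partialDensity_union_le N)
  refine tendsto_of_tendsto_of_tendsto_of_le_of_le (by simpa using hs.sub hz)
    (by simpa using hs.add hz) (fun N => ?_) (hle hst)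
  exact sub_le_iff_le_add.2 (hle (fun n hn => (hst n hn).symm) N)

end HasDensity

lemma hasDensity_zero_of_forall_subset {s : Set ℕ}
    (h : ∀ ε > 0, ∃ t c, s ⊆ t ∧ HasDensity t c ∧ c ≤ ε) : HasDensity s 0 := by
  refine tendsto_order.2 ⟨fun a ha => Eventually.of_forall fun N =>
    ha.trans_le (partialDensity_nonneg N), fun a ha => ?_⟩
  obtain ⟨t, c, hst, ht, hc⟩ := h (a / 2) (half_pos ha)
  filter_upwards [ht.eventually (gt_mem_nhds (by linarith : c < a))] with N hN
  exact (partialDensity_mono N hst).trans_lt hN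

lemma hasDensity_setOf_iff {p : ℕ → Prop} [DecidablePred p] {c : ℝ} :
    HasDensity {n | p n} c ↔
      Tendsto (fun N : ℕ => (((Finset.Icc 1 N).filter p).card : ℝ) / N) atTop (𝓝 c) := by
  unfold HasDensity partialDensity
  -- the two sides differ only in the `Decidable` instances used by `Finset.filter`
  convert Iff.rfl
  rfl

namespace UDMod1

variable {y w : ℕ → ℝ}

lemma hasDensity_Ico (h : UDMod1 y) {a b : ℝ} (ha : 0 ≤ a) (hab : a ≤ b) (hb : b ≤ 1) :
    HasDensity {n | Int.fract (y n) ∈ Set.Ico a b} (b - a) := by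
  rcases hab.eq_or_lt with rfl | hab
  · simpa using hasDensity_empty
  · exact hasDensity_setOf_iff.2 (h a b ha hab hb)

lemma hasDensity_fract_eq (h : UDMod1 y) (a : ℝ) :
    HasDensity {n | Int.fract (y n) = a} 0 := by
  refine hasDensity_zero_of_forall_subset fun ε hε => ?_
  by_cases ha : 0 ≤ a ∧ a < 1
  · refine ⟨_, _, fun n hn => ?_, h.hasDensity_Ico (b := min (a + ε) 1) ha.1
      (le_min (by linarith) ha.2.le) (min_le_right _ _), ?_⟩
    · show Int.fract (y n) ∈ Set.Ico a (min (a + ε) 1)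
      rw [hn]
      exact ⟨le_rfl, lt_min (by linarith) ha.2⟩
    · linarith [min_le_left (a + ε) 1]
  · refine ⟨∅, 0, fun n hn => ha ?_, hasDensity_empty, hε.le⟩
    exact hn ▸ ⟨Int.fract_nonneg _, Int.fract_lt_one _⟩

lemma congr_of_null (h : UDMod1 y) {z : Set ℕ} (hz : HasDensity z 0)
    (hyw : ∀ n ∉ z, y n = w n) : UDMod1 w := by
  intro a b ha hab hb
  rw [← hasDensity_setOf_iff]
  exact (h.hasDensity_Ico ha hab.le hb).congr_of_null hz fun n hn => by simp [hyw n hn]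

end UDMod1

lemma udMod1_iff_hasDensity_fract_lt {y : ℕ → ℝ} :
    UDMod1 y ↔ ∀ u, 0 ≤ u → u ≤ 1 → HasDensity {n | Int.fract (y n) < u} u := by
  refine ⟨fun h u hu0 hu1 => ?_, fun h a b ha hab hb => ?_⟩
  · simpa [Int.fract_nonneg] using h.hasDensity_Ico le_rfl hu0 hu1
  · rw [← hasDensity_setOf_iff]
    convert (h b (ha.trans hab.le) hb).diff (h a ha (hab.le.trans hb))
      (fun n hn => lt_trans hn hab) using 1
    ext n
    simp [and_comm]

lemma udMod1_iff_hasDensity_fract_le {y : ℕ → ℝ} :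
    UDMod1 y ↔ ∀ u, 0 ≤ u → u < 1 → HasDensity {n | Int.fract (y n) ≤ u} u := by
  refine ⟨fun h u hu0 hu1 => ?_, fun h => udMod1_iff_hasDensity_fract_lt.2 fun u hu0 hu1 => ?_⟩
  · refine (udMod1_iff_hasDensity_fract_lt.1 h u hu0 hu1.le).congr_of_null
      (h.hasDensity_fract_eq u) fun n hn => ?_
    simp only [Set.mem_ofPred_eq] at hn ⊢
    exact ⟨le_of_lt, fun h' => h'.lt_of_ne hn⟩
  rcases hu1.lt_or_eq with hu1 | rfl
  · have hpt : HasDensity {n | Int.fract (y n) = u} 0 := by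
      refine hasDensity_zero_of_forall_subset fun ε hε => ?_
      rcases hu0.eq_or_lt with rfl | hu0
      · exact ⟨_, 0, fun n hn => le_of_eq hn, h 0 le_rfl one_pos, hε.le⟩
      · have hδ : 0 < min ε u := lt_min hε hu0
        refine ⟨_, _, fun n (hn : Int.fract (y n) = u) => ?_, (h u hu0.le hu1).diff
          (h (u - min ε u) (by linarith [min_le_right ε u]) (by linarith))
          (fun n hn => by simp only [Set.mem_ofPred_eq] at hn ⊢; linarith), ?_⟩
        · simp only [Set.mem_sdiff, Set.mem_ofPred_eq, hn, not_le]
          exact ⟨le_rfl, by linarith⟩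
        · linarith [min_le_left ε u]
    refine (h u hu0 hu1).congr_of_null hpt fun n hn => ?_
    simp only [Set.mem_ofPred_eq] at hn ⊢
    exact ⟨fun h' => h'.lt_of_ne hn, le_of_lt⟩
  · simpa [Int.fract_lt_one] using hasDensity_univ

lemma Int.fract_natCast_mul_lt_iff {k : ℕ} (hk : 0 < k) (y u : ℝ) :
    Int.fract (k * y) < u ↔ ∃ j < k, Int.fract y ∈ Set.Ico (j / k : ℝ) ((j + u) / k) := by
  have hk' : (0 : ℝ) < k := by exact_mod_cast hk
  have hfract : Int.fract (k * y) = Int.fract (k * Int.fract y) :=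
    Int.fract_eq_fract.2 ⟨k * ⌊y⌋, by rw [Int.fract]; push_cast; ring⟩
  have hs0 : 0 ≤ k * Int.fract y := by positivity
  simp only [hfract, Set.mem_Ico, div_le_iff₀ hk', lt_div_iff₀ hk', mul_comm _ (k : ℝ)]
  constructor
  · intro hu
    refine ⟨⌊k * Int.fract y⌋₊, (Nat.floor_lt hs0).2 ?_, Nat.floor_le hs0, ?_⟩
    · simpa using mul_lt_mul_of_pos_left (Int.fract_lt_one y) hk'
    · rw [Int.fract, ← Int.natCast_floor_eq_floor hs0] at hu
      push_cast at hu
      linarith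
  · rintro ⟨j, -, hj, hju⟩
    have : (j : ℤ) ≤ ⌊k * Int.fract y⌋ := Int.le_floor.2 (by exact_mod_cast hj)
    have : (j : ℝ) ≤ ⌊k * Int.fract y⌋ := by exact_mod_cast this
    rw [Int.fract]
    linarith

lemma Int.fract_add_lt_iff {u : ℝ} (hu : u ≤ 1) (c y : ℝ) :
    Int.fract (c + y) < u ↔
      Int.fract y < u - Int.fract c ∨
        1 - Int.fract c ≤ Int.fract y ∧ Int.fract y < 1 - Int.fract c + u := by
  have hc0 := Int.fract_nonneg c
  have hc1 := Int.fract_lt_one c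
  have hy0 := Int.fract_nonneg y
  have hy1 := Int.fract_lt_one y
  by_cases hsum : Int.fract c + Int.fract y < 1
  · have : Int.fract (c + y) = Int.fract c + Int.fract y :=
      Int.fract_eq_iff.2 ⟨by positivity, hsum, ⌊c⌋ + ⌊y⌋, by
        simp only [Int.fract]; push_cast; ring⟩
    rw [this]
    constructor
    · intro h; left; linarith
    · rintro (h | h) <;> linarith
  · have : Int.fract (c + y) = Int.fract c + Int.fract y - 1 :=
      Int.fract_eq_iff.2 ⟨by linarith, by linarith, ⌊c⌋ + ⌊y⌋ + 1, by
        simp only [Int.fract]; push_cast; ring⟩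
    rw [this]
    constructor
    · intro h; right; constructor <;> linarith
    · rintro (h | h) <;> linarith

namespace UDMod1

variable {y : ℕ → ℝ}

lemma const_add (h : UDMod1 y) (c : ℝ) : UDMod1 (fun n => c + y n) := by
  rw [udMod1_iff_hasDensity_fract_lt] at h ⊢
  intro u hu0 hu1
  have hγ0 := Int.fract_nonneg c
  have hγ1 := Int.fract_lt_one c
  have hy : ∀ n, 0 ≤ Int.fract (y n) ∧ Int.fract (y n) < 1 :=
    fun n => ⟨Int.fract_nonneg _, Int.fract_lt_one _⟩
  simp only [Int.fract_add_lt_iff hu1]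
  rcases le_or_gt u (Int.fract c) with hu | hu
  · convert (h (1 - Int.fract c + u) (by linarith) (by linarith)).diff
      (h (1 - Int.fract c) (by linarith) (by linarith)) (fun n hn => by
        simp only [Set.mem_ofPred_eq] at hn ⊢; linarith) using 1
    · ext n
      simp only [Set.mem_ofPred_eq, Set.mem_sdiff, not_lt]
      have := hy n
      constructor
      · rintro (h' | h') <;> constructor <;> linarith
      · rintro ⟨h₁, h₂⟩; right; exact ⟨h₂, h₁⟩
    · ring
  · convert (h (u - Int.fract c) (by linarith) (by linarith)).union
      (hasDensity_univ.diff (h (1 - Int.fract c) (by linarith) (by linarith))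
        (Set.subset_univ _)) ?_ using 1
    · ext n
      simp only [Set.mem_ofPred_eq, Set.mem_union, Set.mem_sdiff, Set.mem_univ, true_and,
        not_lt]
      have := hy n
      constructor
      · rintro (h' | h')
        exacts [Or.inl h', Or.inr h'.1]
      · rintro (h' | h')
        exacts [Or.inl h', Or.inr ⟨h', by linarith⟩]
    · ring
    · refine Set.disjoint_left.2 fun n hn hn' => ?_
      simp only [Set.mem_ofPred_eq, Set.mem_sdiff, Set.mem_univ, true_and, not_lt] at hn hn'
      linarith

lemma natCast_mul (h : UDMod1 y) {k : ℕ} (hk : 0 < k) : UDMod1 (fun n => k * y n) := by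
  rw [udMod1_iff_hasDensity_fract_lt]
  intro u hu0 hu1
  have hk' : (0 : ℝ) < k := by exact_mod_cast hk
  have hsets : {n | Int.fract (k * y n) < u} =
      ⋃ j ∈ Finset.range k, {n | Int.fract (y n) ∈ Set.Ico (j / k : ℝ) ((j + u) / k)} := by
    ext n
    simp only [Set.mem_ofPred_eq, Set.mem_iUnion, Finset.mem_range, exists_prop,
      Int.fract_natCast_mul_lt_iff hk]
  have hsum : ∑ j ∈ Finset.range k, ((j + u) / k - j / k : ℝ) = u := by
    simp only [← sub_div, add_sub_cancel_left, Finset.sum_const, Finset.card_range, nsmul_eq_mul]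
    field_simp
  have hgap : ∀ i j : ℕ, i < j → (i + u) / k ≤ (j / k : ℝ) := fun i j hij => by
    have : (i : ℝ) + 1 ≤ j := by exact_mod_cast hij
    gcongr
    linarith
  rw [hsets]
  nth_rw 2 [← hsum]
  refine HasDensity.biUnion (fun j hj => h.hasDensity_Ico (by positivity) ?_ ?_) ?_
  · gcongr; linarith
  · have : (j : ℝ) + 1 ≤ k := by exact_mod_cast Finset.mem_range.1 hj
    rw [div_le_one hk']
    linarith
  · intro i _ j _ hij
    refine Set.disjoint_left.2 fun n hi hj => ?_
    simp only [Set.mem_ofPred_eq, Set.mem_Ico] at hi hj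
    rcases hij.lt_or_gt with hij | hij
    · linarith [hgap i j hij]
    · linarith [hgap j i hij]

lemma neg (h : UDMod1 y) : UDMod1 (fun n => -y n) := by
  rw [udMod1_iff_hasDensity_fract_lt]
  intro u hu0 hu1
  have hnull : HasDensity ({n | Int.fract (y n) = 0} ∪ {n | Int.fract (y n) = 1 - u}) 0 :=
    (h.hasDensity_fract_eq 0).congr_of_null (h.hasDensity_fract_eq (1 - u)) fun n hn => by
      simp [hn]
  have hIco := h.hasDensity_Ico (a := 1 - u) (b := 1) (by linarith) (by linarith) le_rfl
  rw [sub_sub_cancel] at hIco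
  refine hIco.congr_of_null hnull fun n hn => ?_
  simp only [Set.mem_union, Set.mem_ofPred_eq, not_or] at hn
  simp only [Set.mem_ofPred_eq, Set.mem_Ico, Int.fract_neg hn.1, Int.fract_lt_one, and_true]
  constructor
  · intro h'
    linarith [lt_of_le_of_ne h' (Ne.symm hn.2)]
  · intro h'
    linarith

lemma intCast_mul (h : UDMod1 y) {k : ℤ} (hk : k ≠ 0) : UDMod1 (fun n => k * y n) := by
  obtain ⟨m, rfl | rfl⟩ := k.eq_nat_or_neg
  · exact_mod_cast h.natCast_mul (Nat.pos_of_ne_zero (by simpa using hk))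
  · simpa [neg_mul] using (h.natCast_mul (Nat.pos_of_ne_zero (by simpa using hk))).neg

end UDMod1

lemma signif_eq_rpow_fract {r : ℝ} (hr : 0 < r) :
    signif r = 10 ^ Int.fract (Real.logb 10 r) := by
  rw [signif, if_neg hr.ne', Int.fract, Real.rpow_sub (by norm_num),
    Real.rpow_logb (by norm_num) (by norm_num) hr, Real.rpow_intCast]

-- Also true at `x = 0`, through the conventions `signif 0 = 0` and `Real.logb 10 0 = 0`.
lemma signif_abs_le_iff (x : ℝ) {t : ℝ} (ht : 1 ≤ t) :
    signif |x| ≤ t ↔ Int.fract (Real.logb 10 |x|) ≤ Real.logb 10 t := by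
  rcases eq_or_ne x 0 with rfl | hx
  · rw [abs_zero, signif, if_pos rfl, Real.logb_zero, Int.fract_zero]
    exact iff_of_true (by linarith) (Real.logb_nonneg (by norm_num) ht)
  · rw [signif_eq_rpow_fract (abs_pos.2 hx),
      Real.le_logb_iff_rpow_le (by norm_num) (by linarith)]

theorem benfordSeq_iff_udMod1 {x : ℕ → ℝ} :
    BenfordSeq x ↔ UDMod1 (fun n => Real.logb 10 |x n|) := by
  rw [udMod1_iff_hasDensity_fract_le]
  constructor
  · intro hx u hu0 hu1
    have ht1 : 1 ≤ (10 : ℝ) ^ u := Real.one_le_rpow (by norm_num) hu0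
    have ht10 : (10 : ℝ) ^ u < 10 := by
      simpa using Real.rpow_lt_rpow_of_exponent_lt (by norm_num : (1 : ℝ) < 10) hu1
    have := hasDensity_setOf_iff.2 (hx _ ht1 ht10)
    simpa only [signif_abs_le_iff _ ht1, Real.logb_rpow (by norm_num : (0 : ℝ) < 10)
      (by norm_num)] using this
  · intro h t ht1 ht10
    rw [← hasDensity_setOf_iff]
    have hlt : Real.logb 10 t < 1 := by
      rw [Real.logb_lt_iff_lt_rpow (by norm_num) (by linarith)]
      simpa using ht10
    simpa only [signif_abs_le_iff _ ht1] using
      h _ (Real.logb_nonneg (by norm_num) ht1) hlt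

/-- if `(x n)` is Benford then so is `(α * x n ^ k)` for `α ≠ 0`, `k ≠ 0`
(`zpow` on `ℝ` satisfies `(0:ℝ) ^ k = 0` for `k ≠ 0`). -/
theorem benford_smul_zpow (x : ℕ → ℝ) (hx : BenfordSeq x) (α : ℝ) (k : ℤ)
    (hα : α ≠ 0) (hk : k ≠ 0) :
    BenfordSeq (fun n => α * x n ^ k) := by
  rw [benfordSeq_iff_udMod1] at hx ⊢
  refine ((hx.intCast_mul hk).const_add (Real.logb 10 |α|)).congr_of_null
    (hx.hasDensity_fract_eq 0) fun n hn => ?_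
  have hxn : x n ≠ 0 := fun h0 => hn (by simp [h0])
  rw [abs_mul, abs_zpow, Real.logb_mul (abs_ne_zero.2 hα) (zpow_ne_zero _ (abs_ne_zero.2 hxn)),
    Real.logb, Real.logb, Real.logb, Real.log_zpow, mul_div_assoc]
end

section
/- Let d > 1 and let P be a d×d row-stochastic matrix that is irreducible and aperiodic. Then 1 is an eigenvalue of P, every eigenvalue λ ≠ 1 of P satisfies |λ| < 1, and there exists a row-stochastic matrix P* such that P^n converges entrywise to P* as n → ∞. -/
open Filter Topology MeasureTheory
open scoped Classical

/-! Doeblin's argument: if every entry of `P ^ m` is at least `ε > 0`, then multiplying a vector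
by `P ^ m` shrinks the spread `max - min` of its entries by the factor `1 - ε`, while multiplying
by `P` never raises the maximum. Hence every column of `P ^ k` converges to a constant vector, so
`P ^ k` converges to a matrix that is stochastic as a limit of stochastic ones. The vector of ones
is an eigenvector for `1`; for an eigenvector `v` of `z`, the sequence `z ^ k • v = P ^ k *ᵥ v`
converges, which forces `z = 1` or `‖z‖ < 1`. -/

open Matrix

lemma rowStochastic_iff_mem_rowStochastic {d : ℕ} {P : Matrix (Fin d) (Fin d) ℝ} :
    RowStochastic P ↔ P ∈ rowStochastic ℝ (Fin d) :=
  mem_rowStochastic_iff_sum.symm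

lemma isClosed_rowStochastic (n : Type*) [Fintype n] [DecidableEq n] :
    IsClosed (rowStochastic ℝ n : Set (Matrix n n ℝ)) := by
  have hnonneg : IsClosed {M : Matrix n n ℝ | ∀ i j, 0 ≤ M i j} := by
    simp only [Set.ofPred_forall]
    exact isClosed_iInter fun i => isClosed_iInter fun j =>
      isClosed_le continuous_const ((continuous_apply j).comp (continuous_apply i))
  exact hnonneg.inter (isClosed_eq (continuous_id.matrix_mulVec continuous_const) continuous_const)

section Contraction

variable {n : Type*} [Fintype n]

noncomputable def spread (v : n → ℝ) : ℝ := (⨆ i, v i) - ⨅ i, v i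

lemma spread_nonneg [Nonempty n] (v : n → ℝ) : 0 ≤ spread v := by
  obtain ⟨i⟩ := ‹Nonempty n›
  exact sub_nonneg.2 ((ciInf_le (Finite.bddBelow_range v) i).trans
    (le_ciSup (Finite.bddAbove_range v) i))

variable [DecidableEq n] {M : Matrix n n ℝ}

lemma iInf_le_mulVec_apply (hM : M ∈ rowStochastic ℝ n) (v : n → ℝ) (i : n) :
    ⨅ j, v j ≤ (M *ᵥ v) i :=
  calc ⨅ j, v j = ∑ j, M i j * ⨅ k, v k := by
        rw [← Finset.sum_mul, sum_row_of_mem_rowStochastic hM, one_mul]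
    _ ≤ ∑ j, M i j * v j := Finset.sum_le_sum fun j _ =>
        mul_le_mul_of_nonneg_left (ciInf_le (Finite.bddBelow_range v) j)
          (nonneg_of_mem_rowStochastic hM)

variable [Nonempty n]

/-- The row puts mass at least `ε` on a minimiser of `v`. -/
lemma mulVec_apply_le_iSup_sub (hM : M ∈ rowStochastic ℝ n) {ε : ℝ} {i : n}
    (hε : ∀ j, ε ≤ M i j) (v : n → ℝ) :
    (M *ᵥ v) i ≤ (⨆ j, v j) - ε * spread v := by
  obtain ⟨j₀, hj₀⟩ := exists_eq_ciInf_of_finite (f := v)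
  set S := ⨆ j, v j
  have hle : ∀ j, v j ≤ S := le_ciSup (Finite.bddAbove_range v)
  calc (M *ᵥ v) i = S - ∑ j, M i j * (S - v j) := by
        simp only [mulVec, dotProduct, mul_sub, Finset.sum_sub_distrib, ← Finset.sum_mul,
          sum_row_of_mem_rowStochastic hM, one_mul, sub_sub_cancel]
    _ ≤ S - M i j₀ * (S - v j₀) := sub_le_sub_left (Finset.single_le_sum
        (fun j _ => mul_nonneg (nonneg_of_mem_rowStochastic hM) (sub_nonneg.2 (hle j)))
        (Finset.mem_univ j₀)) S
    _ ≤ S - ε * spread v := by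
        rw [spread, ← hj₀]
        exact sub_le_sub_left (mul_le_mul_of_nonneg_right (hε j₀) (sub_nonneg.2 (hle j₀))) S

lemma iSup_mulVec_le (hM : M ∈ rowStochastic ℝ n) (v : n → ℝ) :
    ⨆ i, (M *ᵥ v) i ≤ ⨆ j, v j :=
  ciSup_le fun i => by
    simpa using mulVec_apply_le_iSup_sub hM (fun j => nonneg_of_mem_rowStochastic hM) v

lemma spread_mulVec_le (hM : M ∈ rowStochastic ℝ n) {ε : ℝ} (hε : ∀ i j, ε ≤ M i j)
    (v : n → ℝ) : spread (M *ᵥ v) ≤ (1 - ε) * spread v := by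
  have hsup : ⨆ i, (M *ᵥ v) i ≤ (⨆ j, v j) - ε * spread v :=
    ciSup_le fun i => mulVec_apply_le_iSup_sub hM (hε i) v
  have hinf : ⨅ j, v j ≤ ⨅ i, (M *ᵥ v) i := le_ciInf fun i => iInf_le_mulVec_apply hM v i
  simp only [spread] at hsup ⊢
  linarith

lemma antitone_spread_pow_mulVec (hM : M ∈ rowStochastic ℝ n)
    (v : n → ℝ) : Antitone fun k => spread (M ^ k *ᵥ v) :=
  antitone_nat_of_succ_le fun k => by
    simpa [pow_succ', ← mulVec_mulVec] using
      spread_mulVec_le hM (fun _ _ => nonneg_of_mem_rowStochastic hM) (M ^ k *ᵥ v)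

lemma tendsto_spread_pow_mulVec (hM : M ∈ rowStochastic ℝ n)
    {m : ℕ} (hm : 0 < m) (hpos : ∀ i j, 0 < (M ^ m) i j) (v : n → ℝ) :
    Tendsto (fun k => spread (M ^ k *ᵥ v)) atTop (𝓝 0) := by
  obtain ⟨p, hp⟩ := exists_eq_ciInf_of_finite (f := fun p : n × n => (M ^ m) p.1 p.2)
  set ε := ⨅ p : n × n, (M ^ m) p.1 p.2
  have hε : ∀ i j, ε ≤ (M ^ m) i j := fun i j => ciInf_le (Finite.bddBelow_range _) (i, j)
  have hε_pos : 0 < ε := hp ▸ hpos p.1 p.2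
  have hε_le : ε ≤ 1 := (hε p.1 p.2).trans (le_one_of_mem_rowStochastic (pow_mem hM m))
  have hcontract : ∀ j, spread (M ^ (j * m) *ᵥ v) ≤ (1 - ε) ^ j * spread v := by
    intro j
    induction j with
    | zero => simp
    | succ j ih =>
      calc spread (M ^ ((j + 1) * m) *ᵥ v) = spread (M ^ m *ᵥ (M ^ (j * m) *ᵥ v)) := by
            rw [mulVec_mulVec, ← pow_add, add_mul, one_mul, add_comm]
        _ ≤ (1 - ε) * spread (M ^ (j * m) *ᵥ v) := spread_mulVec_le (pow_mem hM m) hε _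
        _ ≤ (1 - ε) * ((1 - ε) ^ j * spread v) := by gcongr
        _ = (1 - ε) ^ (j + 1) * spread v := by ring
  have hbound : ∀ k, spread (M ^ k *ᵥ v) ≤ (1 - ε) ^ (k / m) * spread v := fun k =>
    (antitone_spread_pow_mulVec hM v (Nat.div_mul_le_self k m)).trans (hcontract _)
  have hgeom : Tendsto (fun k => (1 - ε) ^ (k / m) * spread v) atTop (𝓝 0) := by
    simpa using ((tendsto_pow_atTop_nhds_zero_of_lt_one (by linarith) (by linarith)).comp
      (Nat.tendsto_div_const_atTop hm.ne')).mul_const (spread v)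
  exact squeeze_zero (fun k => spread_nonneg _) hbound hgeom

lemma exists_tendsto_pow_mulVec_const (hM : M ∈ rowStochastic ℝ n) {m : ℕ} (hm : 0 < m)
    (hpos : ∀ i j, 0 < (M ^ m) i j) (v : n → ℝ) :
    ∃ c : ℝ, Tendsto (fun k => M ^ k *ᵥ v) atTop (𝓝 fun _ => c) := by
  set hi := fun k => ⨆ i, (M ^ k *ᵥ v) i
  have hanti : Antitone hi := antitone_nat_of_succ_le fun k => by
    simpa only [hi, pow_succ', ← mulVec_mulVec] using iSup_mulVec_le hM (M ^ k *ᵥ v)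
  have hbdd : BddBelow (Set.range hi) := by
    obtain ⟨i⟩ := ‹Nonempty n›
    refine ⟨⨅ j, v j, Set.forall_mem_range.2 fun k => ?_⟩
    exact (iInf_le_mulVec_apply (pow_mem hM k) v i).trans (le_ciSup (Finite.bddAbove_range _) i)
  have hhi : Tendsto hi atTop (𝓝 (⨅ k, hi k)) := tendsto_atTop_ciInf hanti hbdd
  have hlo : Tendsto (fun k => ⨅ i, (M ^ k *ᵥ v) i) atTop (𝓝 (⨅ k, hi k)) := by
    simpa [hi, spread] using hhi.sub (tendsto_spread_pow_mulVec hM hm hpos v)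
  refine ⟨⨅ k, hi k, tendsto_pi_nhds.2 fun i => ?_⟩
  exact tendsto_of_tendsto_of_tendsto_of_le_of_le hlo hhi
    (fun k => ciInf_le (Finite.bddBelow_range _) i) (fun k => le_ciSup (Finite.bddAbove_range _) i)

lemma exists_mem_rowStochastic_tendsto_pow (hM : M ∈ rowStochastic ℝ n) {m : ℕ} (hm : 0 < m)
    (hpos : ∀ i j, 0 < (M ^ m) i j) :
    ∃ L ∈ rowStochastic ℝ n, Tendsto (fun k => M ^ k) atTop (𝓝 L) := by
  choose c hc using fun j => exists_tendsto_pow_mulVec_const hM hm hpos (Pi.single j 1)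
  have hlim : Tendsto (fun k => M ^ k) atTop (𝓝 (of fun _ j => c j)) :=
    tendsto_pi_nhds.2 fun i => tendsto_pi_nhds.2 fun j => by
      simpa [mulVec_single_one] using tendsto_pi_nhds.1 (hc j) i
  exact ⟨_, (isClosed_rowStochastic n).mem_of_tendsto hlim
    (Eventually.of_forall fun k => pow_mem hM k), hlim⟩

end Contraction

section Eigenvalues

variable {𝕜 : Type*} [NormedField 𝕜]

/-- The limit `c` satisfies `z * c = c`, so `c = 0` unless `z = 1`. -/
lemma norm_lt_one_of_tendsto_pow {z c : 𝕜} (h : Tendsto (fun k : ℕ => z ^ k) atTop (𝓝 c))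
    (hz : z ≠ 1) : ‖z‖ < 1 := by
  have hfix : z * c = c := tendsto_nhds_unique (h.const_mul z) <| by
    simpa [pow_succ'] using (tendsto_add_atTop_iff_nat 1).2 h
  have hc : c = 0 := by
    simpa [sub_eq_zero, hz] using (show (z - 1) * c = 0 by rw [sub_mul, hfix, one_mul, sub_self])
  exact tendsto_pow_atTop_nhds_zero_iff_norm_lt_one.1 (hc ▸ h)

lemma exists_tendsto_pow_of_hasEigenvalue {n : Type*} [Fintype n] [DecidableEq n]
    {A L : Matrix n n 𝕜} (hA : Tendsto (fun k => A ^ k) atTop (𝓝 L)) {z : 𝕜}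
    (hz : Module.End.HasEigenvalue (toLin' A) z) :
    ∃ c, Tendsto (fun k : ℕ => z ^ k) atTop (𝓝 c) := by
  obtain ⟨v, hv⟩ := hz.exists_hasEigenvector
  have hpow (k : ℕ) : A ^ k *ᵥ v = z ^ k • v := by
    rw [← toLin'_apply, toLin'_pow]
    exact hv.pow_apply k
  obtain ⟨i, hi⟩ := Function.ne_iff.1 hv.2
  have hentry : Tendsto (fun k => (A ^ k *ᵥ v) i) atTop (𝓝 ((L *ᵥ v) i)) :=
    ((continuous_apply i).comp (continuous_id.matrix_mulVec continuous_const)).tendsto L |>.comp hA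
  refine ⟨(L *ᵥ v) i / v i, ?_⟩
  simpa [hpow, mul_div_cancel_right₀ _ hi] using hentry.div_const (v i)

end Eigenvalues

lemma mem_spectrumC_iff_hasEigenvalue {d : ℕ} {P : Matrix (Fin d) (Fin d) ℝ} {z : ℂ} :
    z ∈ spectrumC P ↔ Module.End.HasEigenvalue (toLin' (P.map Complex.ofReal)) z := by
  rw [Module.End.hasEigenvalue_iff_isRoot_charpoly, Matrix.charpoly_toLin']
  rfl

lemma one_mem_spectrumC {d : ℕ} [NeZero d] {P : Matrix (Fin d) (Fin d) ℝ}
    (hP : P ∈ rowStochastic ℝ (Fin d)) : 1 ∈ spectrumC P := by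
  refine mem_spectrumC_iff_hasEigenvalue.2 (Module.End.hasEigenvalue_of_hasEigenvector
    (x := (1 : Fin d → ℂ)) ⟨?_, one_ne_zero⟩)
  rw [Module.End.mem_eigenspace_iff, toLin'_apply, one_smul]
  ext i
  simp only [mulVec, dotProduct, map_apply, Pi.one_apply, mul_one]
  exact_mod_cast sum_row_of_mem_rowStochastic hP i

/-- Perron–Frobenius facts for an irreducible aperiodic stochastic matrix. -/
theorem perron_frobenius_stochastic (d : ℕ) (hd : 1 < d) (P : Matrix (Fin d) (Fin d) ℝ)
    (hP : RowStochastic P) (hprim : Primitive P) :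
    (1 : ℂ) ∈ spectrumC P ∧
    (∀ z : ℂ, z ∈ spectrumC P → z ≠ 1 → ‖z‖ < 1) ∧
    ∃ Pstar : Matrix (Fin d) (Fin d) ℝ, RowStochastic Pstar ∧
      ∀ i j, Tendsto (fun n : ℕ => (P ^ n) i j) atTop (𝓝 (Pstar i j)) := by
  have : NeZero d := ⟨by omega⟩
  rw [rowStochastic_iff_mem_rowStochastic] at hP
  obtain ⟨m, hm, hpos⟩ := hprim
  obtain ⟨Pstar, hPstar, hlim⟩ := exists_mem_rowStochastic_tendsto_pow hP hm hpos
  have hlimC :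
      Tendsto (fun k => P.map Complex.ofReal ^ k) atTop (𝓝 (Pstar.map Complex.ofReal)) := by
    have hmap (k : ℕ) : (P ^ k).map Complex.ofReal = P.map Complex.ofReal ^ k :=
      Matrix.map_pow P Complex.ofRealHom k
    simpa only [Function.comp_def, id, hmap] using
      ((continuous_id.matrix_map Complex.continuous_ofReal).tendsto Pstar).comp hlim
  refine ⟨one_mem_spectrumC hP, fun z hz hz1 => ?_, Pstar,
    rowStochastic_iff_mem_rowStochastic.2 hPstar,
    fun i j => tendsto_pi_nhds.1 (tendsto_pi_nhds.1 hlim i) j⟩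
  obtain ⟨c, hc⟩ :=
    exists_tendsto_pow_of_hasEigenvalue hlimC (mem_spectrumC_iff_hasEigenvalue.1 hz)
  exact norm_lt_one_of_tendsto_pow hc hz1
end

section
/- Let d > 1 and let P be a random d×d row-stochastic matrix whose d rows are independent random vectors taking values in the standard simplex Δ_d, each row having a continuous distribution (i.e., assigning probability zero to every Lebesgue-nullset of Δ_d). Then with probability one, the characteristic polynomial of P has d distinct nonzero roots in ℂ. -/
open Filter Topology MeasureTheory
open scoped Classical

/-!
The polynomial `discrDet M = Res(χ_M, χ_M') · det M` in the entries of `M` vanishes exactly when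
the spectrum of `M` is not simple or contains `0`. Parametrising each row of the simplex by its
last `d - 1` coordinates turns it into a real polynomial in `d (d - 1)` variables; it is nonzero,
since it does not vanish at an upper triangular stochastic matrix with distinct diagonal, so its
zero set is Lebesgue-null. By independence the law of the rows is the product of the row laws,
and this product is absolutely continuous with respect to the product of the pushed-forward
Lebesgue measures: the chart is Lipschitz and `μH[d - 1]` on `ℝ^(d - 1)` is Lebesgue measure.
-/

open Polynomial

namespace Matrix

variable {n : Type*} [Fintype n] [DecidableEq n]

/-- The degrees are passed explicitly rather than read off by `natDegree`, so that `discrDet`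
commutes with ring homomorphisms. -/
noncomputable def discrDet {R : Type*} [CommRing R] (M : Matrix n n R) : R :=
  M.charpoly.resultant M.charpoly.derivative (Fintype.card n) (Fintype.card n - 1) * M.det

theorem discrDet_map {R S : Type*} [CommRing R] [CommRing S] (f : R →+* S) (M : Matrix n n R) :
    (M.map f).discrDet = f M.discrDet := by
  rw [discrDet, discrDet, charpoly_map, derivative_map, resultant_map_map,
    ← RingHom.mapMatrix_apply, ← RingHom.map_det, map_mul]

theorem discrDet_eq_eval {R : Type*} [CommRing R] (M : Matrix n n R) :
    M.discrDet =
      MvPolynomial.eval (fun p : n × n => M p.1 p.2) (mvPolynomialX n n R).discrDet := by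
  rw [← discrDet_map, ← RingHom.mapMatrix_apply, mvPolynomialX_mapMatrix_eval]

theorem continuous_discrDet {R : Type*} [CommRing R] [TopologicalSpace R] [IsTopologicalRing R] :
    Continuous (discrDet : Matrix n n R → R) := by
  have : Continuous fun M : Matrix n n R => fun p : n × n => M p.1 p.2 := by fun_prop
  exact ((MvPolynomial.continuous_eval _).comp this).congr fun M => (discrDet_eq_eval M).symm

theorem discrDet_ne_zero_iff {K : Type*} [Field K] [CharZero K] {M : Matrix n n K} :
    M.discrDet ≠ 0 ↔ M.charpoly.Separable ∧ M.det ≠ 0 := by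
  have hdeg : M.charpoly.resultant M.charpoly.derivative (Fintype.card n) (Fintype.card n - 1) =
      M.charpoly.resultant M.charpoly.derivative := by
    rw [natDegree_derivative, charpoly_natDegree_eq_dim]
  rw [discrDet, mul_ne_zero_iff, hdeg, Ne, resultant_eq_zero_iff]
  simp [M.charpoly_monic.ne_zero, Separable]

theorem zero_notMem_roots_charpoly {R : Type*} [CommRing R] [IsDomain R] {M : Matrix n n R}
    (h : M.det ≠ 0) : (0 : R) ∉ M.charpoly.roots := by
  rw [mem_roots M.charpoly_monic.ne_zero, IsRoot, ← coeff_zero_eq_eval_zero]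
  intro h0
  exact h (by rw [det_eq_sign_charpoly_coeff, h0, mul_zero])

theorem simpleSpectrum_of_discrDet_ne_zero {K : Type*} [Field K] [IsAlgClosed K] [CharZero K]
    {M : Matrix n n K} (h : M.discrDet ≠ 0) :
    M.charpoly.roots.Nodup ∧ Multiset.card M.charpoly.roots = Fintype.card n ∧
      (0 : K) ∉ M.charpoly.roots := by
  obtain ⟨hsep, hdet⟩ := discrDet_ne_zero_iff.1 h
  exact ⟨nodup_roots hsep, by rw [IsAlgClosed.card_roots_eq_natDegree, charpoly_natDegree_eq_dim],
    zero_notMem_roots_charpoly hdet⟩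

end Matrix

def simplexChart {R : Type*} [Ring R] {n : ℕ} (y : Fin n → R) : Fin (n + 1) → R :=
  Fin.cons (1 - ∑ k, y k) y

section SimplexChart

variable {n : ℕ}

theorem map_simplexChart {R S : Type*} [Ring R] [Ring S] (f : R →+* S) (y : Fin n → R) :
    (fun j => f (simplexChart y j)) = simplexChart (fun k => f (y k)) := by
  funext j
  refine Fin.cases ?_ (fun k => ?_) j <;> simp [simplexChart, map_sum]

theorem simplexChart_tail {R : Type*} [Ring R] {x : Fin (n + 1) → R} (hx : ∑ j, x j = 1) :
    simplexChart (Fin.tail x) = x := by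
  rw [Fin.sum_univ_succ] at hx
  rw [simplexChart, show 1 - ∑ k, Fin.tail x k = x 0 from (eq_sub_of_add_eq hx).symm]
  exact Fin.cons_self_tail x

theorem lipschitzWith_simplexChart :
    LipschitzWith (n + 1) (simplexChart : (Fin n → ℝ) → Fin (n + 1) → ℝ) := by
  refine LipschitzWith.of_dist_le_mul fun y y' => (dist_pi_le_iff (by positivity)).2 fun j => ?_
  push_cast
  refine Fin.cases ?_ (fun k => ?_) j
  · simp only [simplexChart, Fin.cons_zero, Real.dist_eq, sub_sub_sub_cancel_left,
      ← Finset.sum_sub_distrib]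
    calc |∑ k, (y' k - y k)| ≤ ∑ k, |y' k - y k| := Finset.abs_sum_le_sum_abs _ _
      _ ≤ ∑ _k : Fin n, dist y y' := Finset.sum_le_sum fun k _ => by
          rw [abs_sub_comm, ← Real.dist_eq]; exact dist_le_pi_dist y y' k
      _ ≤ (n + 1) * dist y y' := by
          rw [Finset.sum_const, Finset.card_univ, Fintype.card_fin, nsmul_eq_mul]
          nlinarith [dist_nonneg (x := y) (y := y')]
  · simp only [simplexChart, Fin.cons_succ]
    nlinarith [dist_le_pi_dist y y' k, dist_nonneg (x := y) (y := y')]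

theorem isClosedEmbedding_simplexChart :
    Topology.IsClosedEmbedding (simplexChart : (Fin n → ℝ) → Fin (n + 1) → ℝ) :=
  Function.LeftInverse.isClosedEmbedding (fun _ => Fin.tail_cons _ _)
    (continuous_pi fun _ => continuous_apply _) lipschitzWith_simplexChart.continuous

instance sigmaFinite_map_simplexChart :
    SigmaFinite ((volume : Measure (Fin n → ℝ)).map simplexChart) :=
  isClosedEmbedding_simplexChart.measurableEmbedding.sigmaFinite_map

theorem hausdorffMeasure_restrict_stdSimplex_absolutelyContinuous :
    (μH[n] : Measure (Fin (n + 1) → ℝ)).restrict (stdSimplex ℝ (Fin (n + 1))) ≪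
      (volume : Measure (Fin n → ℝ)).map simplexChart := by
  have hmeas := lipschitzWith_simplexChart (n := n).continuous.measurable
  refine Measure.AbsolutelyContinuous.mk fun s hs h0 => ?_
  rw [Measure.map_apply hmeas hs] at h0
  rw [Measure.restrict_apply hs]
  have hsub : s ∩ stdSimplex ℝ (Fin (n + 1)) ⊆ simplexChart '' (simplexChart ⁻¹' s) :=
    fun x ⟨hxs, hxΔ⟩ => ⟨Fin.tail x, by rwa [Set.mem_preimage, simplexChart_tail hxΔ.2],
      simplexChart_tail hxΔ.2⟩
  have hvol : (μH[n] : Measure (Fin n → ℝ)) = volume := by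
    simpa using hausdorffMeasure_pi_real (ι := Fin n)
  refine measure_mono_null hsub (nonpos_iff_eq_zero.1 ?_)
  calc μH[n] (simplexChart '' (simplexChart ⁻¹' s))
      ≤ ((n : NNReal) + 1 : NNReal) ^ (n : ℝ) *
          μH[n] (simplexChart ⁻¹' s : Set (Fin n → ℝ)) :=
        lipschitzWith_simplexChart.hausdorffMeasure_image_le n.cast_nonneg _
    _ = 0 := by rw [hvol, h0, mul_zero]

end SimplexChart

namespace MvPolynomial

theorem ae_eval_ne_zero_fin {n : ℕ} {Q : MvPolynomial (Fin n) ℝ} (hQ : Q ≠ 0) :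
    ∀ᵐ x : Fin n → ℝ, eval x Q ≠ 0 := by
  induction n with
  | zero =>
    obtain ⟨c, rfl⟩ := C_surjective (Fin 0) Q
    exact ae_of_all _ fun x => by simpa using hQ
  | succ n ih =>
    set q := finSuccEquiv ℝ n Q
    have hq : q ≠ 0 := (map_ne_zero_iff _ (finSuccEquiv ℝ n).injective).2 hQ
    have hslice : ∀ᵐ s : Fin n → ℝ, ∀ᵐ a : ℝ, eval (Fin.cons a s) Q ≠ 0 := by
      filter_upwards [ih (Polynomial.leadingCoeff_ne_zero.2 hq)] with s hs
      have hqs : q.map (eval s) ≠ 0 := fun h => hs <| by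
        simpa using congrArg (Polynomial.coeff · q.natDegree) h
      rw [ae_iff]
      refine measure_mono_null (fun a ha => ?_)
        ((Polynomial.finite_setOfPred_isRoot hqs).measure_zero volume)
      simpa [eval_eq_eval_mv_eval'] using ha
    have hmeas : MeasurableSet {p : ℝ × (Fin n → ℝ) | eval (Fin.cons p.1 p.2) Q ≠ 0} :=
      (isOpen_ne_fun ((continuous_eval Q).comp (by fun_prop)) continuous_const).measurableSet
    have hprod : ∀ᵐ p : ℝ × (Fin n → ℝ), eval (Fin.cons p.1 p.2) Q ≠ 0 :=
      (Measure.ae_prod_iff_ae_ae hmeas).2 ((Measure.ae_ae_comm hmeas).2 hslice)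
    have := (volume_preserving_piFinSuccAbove (fun _ => ℝ) 0).quasiMeasurePreserving.ae hprod
    simpa [Fin.cons_self_tail] using this

theorem ae_eval_ne_zero {ι : Type*} [Fintype ι] {Q : MvPolynomial ι ℝ} (hQ : Q ≠ 0) :
    ∀ᵐ x : ι → ℝ, eval x Q ≠ 0 := by
  let e := Fintype.equivFin ι
  have hpres := volume_preserving_arrowCongr' e (MeasurableEquiv.refl ℝ) (.id volume)
  have he : rename e Q ≠ 0 := (map_ne_zero_iff _ (rename_injective e e.injective)).2 hQ
  filter_upwards [hpres.quasiMeasurePreserving.ae (ae_eval_ne_zero_fin he)] with x hx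
  simpa [eval_rename, MeasurableEquiv.arrowCongr', Equiv.arrowCongr', Function.comp_def] using hx

end MvPolynomial

namespace MeasureTheory

theorem measurePreserving_uncurry {ι κ α : Type*} [Fintype ι] [Fintype κ] [MeasurableSpace α]
    (μ : Measure α) [SigmaFinite μ] :
    MeasurePreserving (Function.uncurry : (ι → κ → α) → ι × κ → α)
      (Measure.pi fun _ => Measure.pi fun _ => μ) (Measure.pi fun _ => μ) := by
  have hm : Measurable (Function.uncurry : (ι → κ → α) → ι × κ → α) :=
    (MeasurableEquiv.curry ι κ α).symm.measurable
  refine ⟨hm, (Measure.pi_eq fun s hs => ?_).symm⟩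
  rw [Measure.map_apply hm (.univ_pi hs)]
  have : Function.uncurry ⁻¹' Set.univ.pi s =
      Set.univ.pi fun i => Set.univ.pi fun j => s (i, j) := by
    ext y
    simp
  rw [this, Measure.pi_pi, Fintype.prod_prod_type]
  simp_rw [Measure.pi_pi]

theorem Measure.absolutelyContinuous_pi {n : ℕ} {α : Fin n → Type*}
    [∀ i, MeasurableSpace (α i)]
    {μ ν : ∀ i, Measure (α i)} [∀ i, SigmaFinite (μ i)] [∀ i, SigmaFinite (ν i)]
    (h : ∀ i, μ i ≪ ν i) : Measure.pi μ ≪ Measure.pi ν := by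
  induction n with
  | zero => rw [Measure.pi_of_empty μ, Measure.pi_of_empty ν]
  | succ n ih =>
    have hμ := (measurePreserving_piFinSuccAbove μ 0).symm
    have hν := (measurePreserving_piFinSuccAbove ν 0).symm
    rw [← hμ.map_eq, ← hν.map_eq]
    exact ((h 0).prod (ih fun i => h _)).map (MeasurableEquiv.measurable _)

end MeasureTheory

noncomputable def triangularStochastic (n : ℕ) : Matrix (Fin (n + 1)) (Fin (n + 1)) ℝ :=
  Matrix.diagonal (fun i : Fin (n + 1) => ((i : ℕ) + 1 : ℝ) / (n + 1)) +
    Matrix.of fun i j : Fin (n + 1) =>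
      if j = Fin.last n then 1 - ((i : ℕ) + 1 : ℝ) / (n + 1) else 0

section TriangularStochastic

variable {n : ℕ}

theorem triangularStochastic_isUpperTriangular : (triangularStochastic n).IsUpperTriangular := by
  intro i j (hji : j < i)
  simp [triangularStochastic, Matrix.diagonal_apply_ne _ hji.ne', (hji.trans_le (Fin.le_last i)).ne]

theorem triangularStochastic_apply_self (i : Fin (n + 1)) :
    triangularStochastic n i i = ((i : ℕ) + 1 : ℝ) / (n + 1) := by
  by_cases hi : i = Fin.last n
  · subst hi
    simp [triangularStochastic, div_self (by positivity : (n : ℝ) + 1 ≠ 0)]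
  · simp [triangularStochastic, hi]

theorem sum_triangularStochastic_apply (i : Fin (n + 1)) :
    ∑ j, triangularStochastic n i j = 1 := by
  simp [triangularStochastic, Finset.sum_add_distrib, Matrix.diagonal_apply]

theorem discrDet_triangularStochastic_ne_zero : (triangularStochastic n).discrDet ≠ 0 := by
  have hdiag : Function.Injective fun i : Fin (n + 1) => ((i : ℕ) + 1 : ℝ) / (n + 1) :=
    fun i j h => by
      rw [div_left_inj' (by positivity)] at h
      exact Fin.ext (by exact_mod_cast add_right_cancel h)
  refine Matrix.discrDet_ne_zero_iff.2 ⟨?_, ?_⟩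
  · rw [Matrix.charpoly_of_isUpperTriangular _ triangularStochastic_isUpperTriangular]
    simpa [triangularStochastic_apply_self] using separable_prod_X_sub_C_iff.2 hdiag
  · rw [Matrix.det_of_isUpperTriangular triangularStochastic_isUpperTriangular]
    exact Finset.prod_ne_zero_iff.2 fun i _ => by
      rw [triangularStochastic_apply_self]; positivity

end TriangularStochastic

noncomputable def chartDiscrDet (n : ℕ) : MvPolynomial (Fin (n + 1) × Fin n) ℝ :=
  (Matrix.of fun i => simplexChart fun k => MvPolynomial.X (i, k)).discrDet

theorem eval_chartDiscrDet {n : ℕ} (z : Fin (n + 1) × Fin n → ℝ) :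
    MvPolynomial.eval z (chartDiscrDet n) =
      (Matrix.of fun i => simplexChart fun k => z (i, k)).discrDet := by
  rw [chartDiscrDet, ← Matrix.discrDet_map]
  congr 1
  ext i j
  simpa using congrFun (map_simplexChart (MvPolynomial.eval z) fun k => MvPolynomial.X (i, k)) j

theorem chartDiscrDet_ne_zero (n : ℕ) : chartDiscrDet n ≠ 0 := by
  intro h
  have hT : (Matrix.of fun i => simplexChart fun k => triangularStochastic n i k.succ) =
      triangularStochastic n := by
    ext i j
    exact congrFun (simplexChart_tail (sum_triangularStochastic_apply i)) j
  apply discrDet_triangularStochastic_ne_zero (n := n)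
  rw [← hT, ← eval_chartDiscrDet (fun p => triangularStochastic n p.1 p.2.succ), h, map_zero]

theorem ae_discrDet_ne_zero (n : ℕ) :
    ∀ᵐ M ∂(Measure.pi fun _ : Fin (n + 1) =>
        (volume : Measure (Fin n → ℝ)).map simplexChart), (Matrix.of M).discrDet ≠ 0 := by
  have hpres : MeasurePreserving (fun y i => simplexChart (y i))
      (volume : Measure (Fin (n + 1) → Fin n → ℝ))
      (Measure.pi fun _ => (volume : Measure (Fin n → ℝ)).map simplexChart) :=
    measurePreserving_pi _ _ fun _ => ⟨lipschitzWith_simplexChart.continuous.measurable, rfl⟩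
  have hopen : IsOpen {M : Fin (n + 1) → Fin (n + 1) → ℝ | (Matrix.of M).discrDet ≠ 0} :=
    isOpen_ne_fun Matrix.continuous_discrDet continuous_const
  rw [← hpres.map_eq, ae_map_iff hpres.aemeasurable hopen.measurableSet]
  filter_upwards [(measurePreserving_uncurry volume).quasiMeasurePreserving.ae
    (MvPolynomial.ae_eval_ne_zero (chartDiscrDet_ne_zero n))] with y hy
  rwa [eval_chartDiscrDet] at hy

theorem random_markov_chain_simple_spectrum_general {Ω : Type*} [MeasurableSpace Ω]
    (μ : MeasureTheory.Measure Ω) [MeasureTheory.IsProbabilityMeasure μ]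
    (d : ℕ) (X : Ω → Matrix (Fin d) (Fin d) ℝ)
    (hmeas : ∀ i, Measurable fun ω => X ω i)
    (hindep : ProbabilityTheory.iIndepFun
      (fun i ω => X ω i) μ)
    (hcont : ∀ i, MeasureTheory.Measure.map (fun ω => X ω i) μ ≪
      (μH[((d : ℝ) - 1)]).restrict (stdSimplex ℝ (Fin d))) :
    ∀ᵐ ω ∂μ,
      (((X ω).map (Complex.ofReal : ℝ → ℂ)).charpoly.roots.Nodup ∧
        Multiset.card (((X ω).map (Complex.ofReal : ℝ → ℂ)).charpoly.roots) = d ∧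
        (0 : ℂ) ∉ ((X ω).map (Complex.ofReal : ℝ → ℂ)).charpoly.roots) := by
  rcases d with _ | n
  · exact ae_of_all _ fun ω => by simp
  simp only [Nat.cast_add, Nat.cast_one, add_sub_cancel_right] at hcont
  have hrows : Measurable fun ω i => X ω i := measurable_pi_lambda _ hmeas
  have hlaw : μ.map (fun ω i => X ω i) ≪
      Measure.pi fun _ => (volume : Measure (Fin n → ℝ)).map simplexChart := by
    rw [hindep.map_fun_eq_pi_map fun i => (hmeas i).aemeasurable]
    exact Measure.absolutelyContinuous_pi fun i =>
      (hcont i).trans hausdorffMeasure_restrict_stdSimplex_absolutelyContinuous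
  have hgeneric : ∀ᵐ ω ∂μ, (X ω).discrDet ≠ 0 :=
    ae_of_ae_map hrows.aemeasurable (hlaw.ae_le (ae_discrDet_ne_zero n))
  filter_upwards [hgeneric] with ω hω
  have hω' : ((X ω).map Complex.ofReal).discrDet ≠ 0 :=
    (Matrix.discrDet_map Complex.ofRealHom (X ω)).trans_ne (Complex.ofReal_ne_zero.2 hω)
  simpa using Matrix.simpleSpectrum_of_discrDet_ne_zero hω'

/-- a random stochastic matrix with independent rows having continuous
distributions on the simplex almost surely has `d` distinct nonzero eigenvalues. -/
theorem random_markov_chain_simple_spectrum {Ω : Type*} [MeasurableSpace Ω]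
    (μ : MeasureTheory.Measure Ω) [MeasureTheory.IsProbabilityMeasure μ]
    (d : ℕ) (hd : 1 < d) (X : Ω → Matrix (Fin d) (Fin d) ℝ)
    (hmeas : ∀ i, Measurable fun ω => X ω i)
    (hindep : ProbabilityTheory.iIndepFun
      (fun i ω => X ω i) μ)
    (hsimplex : ∀ ω i, X ω i ∈ stdSimplex ℝ (Fin d))
    (hcont : ∀ i, MeasureTheory.Measure.map (fun ω => X ω i) μ ≪
      (μH[((d : ℝ) - 1)]).restrict (stdSimplex ℝ (Fin d))) :
    ∀ᵐ ω ∂μ,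
      (((X ω).map (Complex.ofReal : ℝ → ℂ)).charpoly.roots.Nodup ∧
        Multiset.card (((X ω).map (Complex.ofReal : ℝ → ℂ)).charpoly.roots) = d ∧
        (0 : ℂ) ∉ ((X ω).map (Complex.ofReal : ℝ → ℂ)).charpoly.roots) :=
  random_markov_chain_simple_spectrum_general μ d X hmeas hindep hcont
end

section
/- Let x, y ∈ (0,1) with x + y ≠ 1 and let P be the 2×2 row-stochastic matrix with rows (1−x, x) and (y, 1−y). Then P is irreducible and aperiodic, and P is Benford if and only if log₁₀|1−x−y| is irrational. -/
open Filter Topology MeasureTheory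
open scoped Classical

/-!
Write `μ = 1 - x - y` and `P*` for the rank-one limit. Since `P*` is idempotent and
`P = P* + μ • (1 - P*)`, we get `P ^ n = P* + μ ^ n • (1 - P*)`, and `1 - P*` has no zero entry.
So every sequence in the definition of a Benford matrix is geometric, `c μ ^ n` with `c ≠ 0`,
and such a sequence is Benford iff `n log₁₀ |μ| + log₁₀ |c|` is equidistributed modulo one.

If `α = log₁₀ |μ|` is irrational, this is Weyl's theorem. Take a good approximation `p / q` in
lowest terms, `|α - p / q| ≤ 1 / q ^ 2`: on a block of `q` consecutive terms, `j α` is within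
`1 / q` of `j p / q`, and `j ↦ j p mod q` permutes the residues, so the block meets an interval
of length `ℓ` exactly `q ℓ + O(1)` times; `q` can be taken arbitrarily large.
If `α` is rational, the fractional parts take finitely many values, so the counting function
does not move across a gap between them and cannot converge to both ends of the gap.
-/

open Finset

theorem sum_range_add_ediv {q : ℕ} (hq : 0 < q) (m : ℤ) :
    ∑ r ∈ range q, (m + r) / (q : ℤ) = m := by
  have step : ∀ m : ℤ, ∑ r ∈ range q, (m + 1 + r) / (q : ℤ) =
      ∑ r ∈ range q, (m + r) / (q : ℤ) + 1 := by
    intro m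
    have hshift := sum_range_succ' (fun r : ℕ => (m + r) / (q : ℤ)) q
    have hlast : (m + q) / (q : ℤ) = m / q + 1 := by
      simpa using Int.add_mul_ediv_right m 1 (by exact_mod_cast hq.ne' : (q : ℤ) ≠ 0)
    rw [sum_range_succ, hlast] at hshift
    push_cast at hshift
    simp only [add_zero, ← add_assoc, add_right_comm m 1] at hshift ⊢
    linarith
  induction m using Int.induction_on with
  | zero =>
    exact sum_eq_zero fun r hr => Int.ediv_eq_zero_of_lt (by positivity) (by simpa using hr)
  | succ i ih => rw [step, ih]
  | pred i ih =>
    have h := step (-(i : ℤ) - 1)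
    rw [sub_add_cancel, ih] at h
    linarith

theorem sum_range_floor_add_div {q : ℕ} (hq : 0 < q) (t : ℝ) :
    ∑ r ∈ range q, ⌊t + r / q⌋ = ⌊q * t⌋ := by
  have hq' : (q : ℝ) ≠ 0 := by exact_mod_cast hq.ne'
  calc ∑ r ∈ range q, ⌊t + r / q⌋ = ∑ r ∈ range q, (⌊q * t⌋ + r) / (q : ℤ) := by
        refine sum_congr rfl fun r _ => ?_
        rw [← Int.floor_add_natCast, ← Int.floor_div_natCast]
        congr 1
        field_simp
    _ = ⌊q * t⌋ := sum_range_add_ediv hq _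

theorem sum_range_comp_mul_emod {M : Type*} [AddCommMonoid M] {q : ℕ} {p : ℤ}
    (hp : IsCoprime p q) (f : ℤ → M) :
    ∑ j ∈ range q, f (j * p % q) = ∑ r ∈ range q, f r := by
  obtain rfl | hq := q.eq_zero_or_pos
  · simp
  have hq' : (0 : ℤ) < q := by exact_mod_cast hq
  have hmem : ∀ j : ℕ, 0 ≤ (j : ℤ) * p % q ∧ (j : ℤ) * p % q < q := fun j =>
    ⟨Int.emod_nonneg _ hq'.ne', Int.emod_lt_of_pos _ hq'⟩
  set i : ℕ → ℕ := fun j => ((j : ℤ) * p % q).toNat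
  have hmaps : Set.MapsTo i (range q) (range q) := fun j _ => by
    have := hmem j
    simp only [i, coe_range, Set.mem_Iio]
    omega
  have hinj : Set.InjOn i (range q) := by
    intro j hj k hk hjk
    simp only [coe_range, Set.mem_Iio] at hj hk
    have hjk' : (j : ℤ) * p ≡ k * p [ZMOD q] := by
      have := hmem j; have := hmem k
      simp only [i] at hjk
      unfold Int.ModEq
      omega
    have hmod : (j : ℤ) ≡ k [ZMOD q] := by
      simpa [Int.gcd_comm, Int.isCoprime_iff_gcd_eq_one.mp hp] using
        Int.ModEq.cancel_right_div_gcd hq' hjk'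
    unfold Int.ModEq at hmod
    rw [Int.emod_eq_of_lt (by positivity) (by omega), Int.emod_eq_of_lt (by positivity) (by omega)]
      at hmod
    exact_mod_cast hmod
  refine sum_nbij i hmaps hinj (surjOn_of_injOn_of_card_le _ hmaps hinj le_rfl) fun j _ => ?_
  rw [Int.toNat_of_nonneg (hmem j).1]

theorem sum_range_floor_add_mul_div {q : ℕ} (hq : 0 < q) {p : ℤ} (hp : IsCoprime p q) (t : ℝ) :
    ∑ j ∈ range q, ⌊t + j * p / q⌋ = ∑ j ∈ range q, (j * p / q : ℤ) + ⌊q * t⌋ := by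
  have hq' : (q : ℝ) ≠ 0 := by exact_mod_cast hq.ne'
  have hsplit : ∀ j : ℕ, ⌊t + j * p / q⌋ = (j * p / q : ℤ) + ⌊t + ((j * p % q : ℤ) : ℝ) / q⌋ := by
    intro j
    rw [← Int.floor_intCast_add]
    congr 1
    have h : (j : ℝ) * p = q * ((j * p / q : ℤ) : ℝ) + ((j * p % q : ℤ) : ℝ) := by
      exact_mod_cast (Int.mul_ediv_add_emod ((j : ℤ) * p) q).symm
    rw [h]
    field_simp
    ring
  rw [sum_congr rfl fun j _ => hsplit j, sum_add_distrib,
    sum_range_comp_mul_emod hp (fun r : ℤ => ⌊t + (r : ℝ) / q⌋), ← sum_range_floor_add_div hq t]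
  simp

theorem Int.floor_sub_eq {c : ℝ} (hc0 : 0 ≤ c) (hc1 : c ≤ 1) (x : ℝ) :
    ⌊x - c⌋ = ⌊x⌋ - if Int.fract x < c then 1 else 0 := by
  rw [show x - c = (Int.fract x - c) + ⌊x⌋ by rw [Int.fract]; ring, Int.floor_add_intCast]
  have h0 := Int.fract_nonneg x
  have h1 := Int.fract_lt_one x
  split_ifs with h
  · rw [show ⌊Int.fract x - c⌋ = -1 from Int.floor_eq_iff.mpr ⟨by push_cast; linarith,
      by push_cast; linarith⟩]
    ring
  · rw [show ⌊Int.fract x - c⌋ = 0 from Int.floor_eq_iff.mpr ⟨by push_cast; linarith,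
      by push_cast; linarith⟩]
    ring

theorem Int.floor_sub_sub_floor_sub {a b : ℝ} (ha : 0 ≤ a) (hab : a ≤ b) (hb : b ≤ 1) (x : ℝ) :
    ⌊x - a⌋ - ⌊x - b⌋ = if Int.fract x ∈ Set.Ico a b then 1 else 0 := by
  rw [Int.floor_sub_eq ha (hab.trans hb), Int.floor_sub_eq (ha.trans hab) hb]
  by_cases ha' : Int.fract x < a
  · simp [ha', ha'.trans_le hab, Set.mem_Ico]
  · by_cases hb' : Int.fract x < b <;> simp [ha', hb', Set.mem_Ico]

theorem abs_sum_range_floor_add_mul_sub_le {α : ℝ} {p : ℤ} {q : ℕ} (hq : 0 < q)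
    (hp : IsCoprime p q) (happrox : |α - p / q| ≤ 1 / q ^ 2) (s : ℝ) :
    |((∑ j ∈ range q, ⌊s + j * α⌋ - ∑ j ∈ range q, (j * p / q : ℤ) : ℤ) : ℝ) - q * s| ≤ 2 := by
  have hq' : (0 : ℝ) < q := by exact_mod_cast hq
  have hclose : ∀ j ∈ range q, |j * α - j * p / q| ≤ 1 / q := fun j hj => by
    have hj : (j : ℝ) ≤ q := by exact_mod_cast (mem_range.mp hj).le
    calc |j * α - j * p / q| = j * |α - p / q| := by
          rw [mul_div_assoc, ← mul_sub, abs_mul, Nat.abs_cast]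
      _ ≤ q * (1 / q ^ 2) := by gcongr
      _ = 1 / q := by field_simp
  have hlo : ∑ j ∈ range q, ⌊(s - 1 / q) + j * p / q⌋ ≤ ∑ j ∈ range q, ⌊s + j * α⌋ :=
    sum_le_sum fun j hj => Int.floor_le_floor (by linarith [(abs_le.mp (hclose j hj)).1])
  have hhi : ∑ j ∈ range q, ⌊s + j * α⌋ ≤ ∑ j ∈ range q, ⌊(s + 1 / q) + j * p / q⌋ :=
    sum_le_sum fun j hj => Int.floor_le_floor (by linarith [(abs_le.mp (hclose j hj)).2])
  rw [sum_range_floor_add_mul_div hq hp, mul_sub, mul_one_div_cancel hq'.ne', ← le_sub_iff_add_le',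
    ← @Int.cast_le ℝ] at hlo
  rw [sum_range_floor_add_mul_div hq hp, mul_add, mul_one_div_cancel hq'.ne', ← sub_le_iff_le_add',
    ← @Int.cast_le ℝ] at hhi
  have hlo' := Int.lt_floor_add_one (q * s - 1)
  have hhi' := Int.floor_le (q * s + 1)
  rw [abs_le]
  constructor <;> linarith

theorem abs_sum_range_indicator_fract_sub_le {α : ℝ} {p : ℤ} {q : ℕ} (hq : 0 < q)
    (hp : IsCoprime p q) (happrox : |α - p / q| ≤ 1 / q ^ 2) (γ : ℝ) {a b : ℝ} (ha : 0 ≤ a)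
    (hab : a ≤ b) (hb : b ≤ 1) :
    |∑ j ∈ range q, (if Int.fract (γ + j * α) ∈ Set.Ico a b then 1 else 0 : ℝ) - q * (b - a)|
      ≤ 4 := by
  have hterm : ∀ j : ℕ, (if Int.fract (γ + j * α) ∈ Set.Ico a b then 1 else 0 : ℝ) =
      ((⌊(γ - a) + j * α⌋ - ⌊(γ - b) + j * α⌋ : ℤ) : ℝ) := fun j => by
    rw [sub_add_eq_add_sub, sub_add_eq_add_sub, Int.floor_sub_sub_floor_sub ha hab hb]
    split_ifs <;> simp
  have hA := abs_sum_range_floor_add_mul_sub_le hq hp happrox (γ - a)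
  have hB := abs_sum_range_floor_add_mul_sub_le hq hp happrox (γ - b)
  rw [abs_le] at hA hB ⊢
  simp only [hterm, ← Int.cast_sum, sum_sub_distrib, Int.cast_sub] at hA hB ⊢
  constructor <;> linarith [hA.1, hA.2, hB.1, hB.2]

theorem Rat.finite_setOf_den_le_abs_sub_lt_one (α : ℝ) (Q : ℕ) :
    {r : ℚ | r.den ≤ Q ∧ |α - r| < 1}.Finite := by
  set M : ℤ := ⌈(|α| + 1) * Q⌉
  refine ((Set.finite_Icc (-M) M).prod (Set.finite_Icc 0 Q)).image
    (fun z : ℤ × ℕ => (z.1 / z.2 : ℚ)) |>.subset fun r ⟨hden, hr⟩ => ?_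
  have hnum : (r.num : ℝ) = r * r.den := by
    rw [Rat.cast_def]; field_simp
  have hbound : |(r.num : ℝ)| ≤ M := by
    calc |(r.num : ℝ)| = |(r : ℝ)| * r.den := by rw [hnum, abs_mul, Nat.abs_cast]
      _ ≤ (|α| + 1) * Q := by
          gcongr
          linarith [abs_sub_abs_le_abs_sub (r : ℝ) α, abs_sub_comm α r]
      _ ≤ M := Int.le_ceil _
  refine ⟨(r.num, r.den), ⟨abs_le.mp (by exact_mod_cast hbound), Nat.zero_le _, hden⟩,
    Rat.num_div_den r⟩

theorem Irrational.exists_coprime_abs_sub_div_le {α : ℝ} (hα : Irrational α) (Q : ℕ) :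
    ∃ (p : ℤ) (q : ℕ), Q < q ∧ IsCoprime p q ∧ |α - p / q| ≤ 1 / (q : ℝ) ^ 2 := by
  obtain ⟨r, hr, hrQ⟩ := Set.not_subset.mp fun hsub =>
    Real.infinite_rat_abs_sub_lt_one_div_den_sq_of_irrational hα
      ((Rat.finite_setOf_den_le_abs_sub_lt_one α Q).subset hsub)
  have hr1 : |α - r| < 1 := hr.trans_le <| by
    rw [div_le_one (by positivity)]
    exact one_le_pow₀ (by exact_mod_cast r.pos)
  refine ⟨r.num, r.den, by simpa [hr1] using hrQ, Int.isCoprime_iff_gcd_eq_one.mpr r.reduced, ?_⟩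
  rw [← Rat.cast_def]
  exact hr.le

theorem abs_sum_range_mul_sub_le {u : ℕ → ℝ} {c E : ℝ} {q : ℕ}
    (hblock : ∀ m, |∑ j ∈ range q, u (m + j) - q * c| ≤ E) (K : ℕ) :
    |∑ n ∈ range (K * q), u n - (K * q : ℕ) * c| ≤ K * E := by
  induction K with
  | zero => simp
  | succ K ih =>
    rw [add_one_mul, sum_range_add]
    calc |∑ n ∈ range (K * q), u n + ∑ j ∈ range q, u (K * q + j) - ((K * q + q : ℕ) : ℝ) * c|
        = |(∑ n ∈ range (K * q), u n - (K * q : ℕ) * c) +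
            (∑ j ∈ range q, u (K * q + j) - q * c)| := by push_cast; ring_nf
      _ ≤ K * E + E := (abs_add_le _ _).trans (add_le_add ih (hblock _))
      _ = (K + 1 : ℕ) * E := by push_cast; ring

theorem abs_sum_range_sub_le_of_block {u : ℕ → ℝ} {c E : ℝ} {q : ℕ} (hq : 0 < q)
    (hu : ∀ n, u n ∈ Set.Icc 0 1) (hc : c ∈ Set.Icc 0 1)
    (hblock : ∀ m, |∑ j ∈ range q, u (m + j) - q * c| ≤ E) (N : ℕ) :
    |∑ n ∈ range N, u n - N * c| ≤ N / q * E + q := by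
  set K := N / q
  set r := N % q
  have hKr : K * q + r = N := by rw [mul_comm]; exact Nat.div_add_mod N q
  have hK : (K : ℝ) ≤ N / q := by
    rw [le_div_iff₀ (by exact_mod_cast hq)]
    exact_mod_cast Nat.div_mul_le_self N q
  have hE : 0 ≤ E := (abs_nonneg _).trans (hblock 0)
  have hr : (r : ℝ) ≤ q := by exact_mod_cast (Nat.mod_lt N hq).le
  have htail : |∑ j ∈ range r, u (K * q + j) - r * c| ≤ r := by
    have h0 : 0 ≤ ∑ j ∈ range r, u (K * q + j) := sum_nonneg fun j _ => (hu _).1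
    have h1 : ∑ j ∈ range r, u (K * q + j) ≤ r := by
      simpa using sum_le_sum fun j (_ : j ∈ range r) => (hu (K * q + j)).2
    rw [abs_le]
    constructor <;> nlinarith [hc.1, hc.2]
  have hsplit : ∑ n ∈ range N, u n - N * c = (∑ n ∈ range (K * q), u n - (K * q : ℕ) * c) +
      (∑ j ∈ range r, u (K * q + j) - r * c) := by
    rw [← hKr, sum_range_add]
    push_cast
    ring
  calc |∑ n ∈ range N, u n - N * c|
      ≤ K * E + r := hsplit ▸ (abs_add_le _ _).trans
        (add_le_add (abs_sum_range_mul_sub_le hblock K) htail)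
    _ ≤ N / q * E + q := by gcongr

theorem tendsto_sum_range_div_of_forall_block {u : ℕ → ℝ} {c : ℝ}
    (hu : ∀ n, u n ∈ Set.Icc 0 1) (hc : c ∈ Set.Icc 0 1)
    (hblock : ∀ ε > 0, ∃ q > 0, ∀ m, |∑ j ∈ range q, u (m + j) - q * c| ≤ ε * q) :
    Tendsto (fun N : ℕ => (∑ n ∈ range N, u n) / N) atTop (𝓝 c) := by
  rw [Metric.tendsto_atTop]
  intro ε hε
  obtain ⟨q, hq, hq_block⟩ := hblock (ε / 2) (half_pos hε)
  obtain ⟨N₀, hN₀⟩ := exists_nat_gt (2 * q / ε)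
  refine ⟨N₀, fun N hN => ?_⟩
  have hNq : 2 * q / ε < N := hN₀.trans_le (by exact_mod_cast hN)
  have hN : (0 : ℝ) < N := lt_of_le_of_lt (by positivity) hNq
  have hsum := abs_sum_range_sub_le_of_block hq hu hc hq_block N
  rw [show (N : ℝ) / q * (ε / 2 * q) = ε / 2 * N by field_simp] at hsum
  rw [Real.dist_eq, div_sub' hN.ne', abs_div, abs_of_pos hN, div_lt_iff₀ hN]
  rw [div_lt_iff₀ hε] at hNq
  linarith

theorem udMod1_natCast_mul_add {α : ℝ} (hα : Irrational α) (β : ℝ) :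
    UDMod1 (fun n : ℕ => n * α + β) := by
  intro a b ha hab hb
  -- `u n` records the term of index `1 + n`, because the counts run over `Icc 1 N`.
  set u : ℕ → ℝ := fun n =>
    if Int.fract ((1 + n : ℕ) * α + β) ∈ Set.Ico a b then 1 else 0
  have hcount : ∀ N : ℕ, (((Icc 1 N).filter fun n : ℕ =>
      Int.fract (n * α + β) ∈ Set.Ico a b).card : ℝ) = ∑ n ∈ range N, u n := fun N => by
    rw [card_filter, Nat.cast_sum, ← Finset.Ico_add_one_right_eq_Icc, sum_Ico_eq_sum_range,
      Nat.add_sub_cancel]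
    refine sum_congr rfl fun n _ => ?_
    simp only [u]
    split_ifs <;> simp
  have hblock : ∀ ε > 0, ∃ q > 0, ∀ m, |∑ j ∈ range q, u (m + j) - q * (b - a)| ≤ ε * q := by
    intro ε hε
    obtain ⟨p, q, hQq, hp, happrox⟩ := hα.exists_coprime_abs_sub_div_le ⌈4 / ε⌉₊
    have hq : 0 < q := (Nat.zero_le _).trans_lt hQq
    refine ⟨q, hq, fun m => ?_⟩
    have h4 : 4 ≤ ε * q := by
      have := (Nat.le_ceil (4 / ε)).trans (Nat.cast_le.mpr hQq.le)
      rwa [div_le_iff₀ hε, mul_comm] at this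
    refine le_trans (le_of_eq ?_) ((abs_sum_range_indicator_fract_sub_le hq hp happrox
      ((1 + m : ℕ) * α + β) ha hab.le hb).trans h4)
    congr 2
    refine sum_congr rfl fun j _ => ?_
    simp only [u]
    push_cast
    ring_nf
  refine (tendsto_sum_range_div_of_forall_block (fun n => ?_) ⟨by linarith, by linarith⟩
    hblock).congr fun N => by rw [hcount]
  simp only [u]
  split_ifs <;> simp

theorem signif_le_iff_fract_logb_le {z t : ℝ} (hz : 0 < z) (ht : 0 < t) :
    signif z ≤ t ↔ Int.fract (Real.logb 10 z) ≤ Real.logb 10 t := by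
  have hsignif : signif z = 10 ^ Int.fract (Real.logb 10 z) := by
    rw [signif, if_neg hz.ne', ← Real.rpow_intCast, Int.fract, Real.rpow_sub (by norm_num),
      Real.rpow_logb (by norm_num) (by norm_num) hz]
  rw [hsignif]
  nth_rewrite 1 [← Real.rpow_logb (b := 10) (by norm_num) (by norm_num) ht]
  exact Real.rpow_le_rpow_left_iff (by norm_num)

theorem benfordSeq_iff_tendsto_card_fract_logb_le {x : ℕ → ℝ} (hx : ∀ n, x n ≠ 0) :
    BenfordSeq x ↔ ∀ τ ∈ Set.Ico (0 : ℝ) 1, Tendsto (fun N : ℕ =>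
      (((Icc 1 N).filter fun n => Int.fract (Real.logb 10 |x n|) ≤ τ).card : ℝ) / N)
      atTop (𝓝 τ) := by
  have hfilter : ∀ t > 0, ∀ N : ℕ, (Icc 1 N).filter (fun n => signif |x n| ≤ t) =
      (Icc 1 N).filter fun n => Int.fract (Real.logb 10 |x n|) ≤ Real.logb 10 t :=
    fun t ht N => filter_congr fun n _ => signif_le_iff_fract_logb_le (abs_pos.mpr (hx n)) ht
  constructor
  · intro h τ hτ
    have h1 : (1 : ℝ) ≤ 10 ^ τ := Real.one_le_rpow (by norm_num) hτ.1
    have h10 : (10 : ℝ) ^ τ < 10 := by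
      simpa using Real.rpow_lt_rpow_of_exponent_lt (by norm_num : (1 : ℝ) < 10) hτ.2
    simpa only [hfilter _ (by positivity), Real.logb_rpow (by norm_num : (0 : ℝ) < 10)
      (by norm_num)] using h _ h1 h10
  · intro h t ht1 ht10
    simp only [hfilter t (by positivity)]
    refine h _ ⟨Real.logb_nonneg (by norm_num) ht1, ?_⟩
    rw [Real.logb_lt_iff_lt_rpow (by norm_num) (by positivity), Real.rpow_one]
    exact ht10

theorem UDMod1.tendsto_card_fract_le {y : ℕ → ℝ} (hy : UDMod1 y) {τ : ℝ}
    (hτ : τ ∈ Set.Ico (0 : ℝ) 1) :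
    Tendsto (fun N : ℕ => (((Icc 1 N).filter fun n => Int.fract (y n) ≤ τ).card : ℝ) / N)
      atTop (𝓝 τ) := by
  refine tendsto_order.2 ⟨fun a ha => ?_, fun b hb => ?_⟩
  · rcases hτ.1.eq_or_lt with rfl | hτ0
    · exact Eventually.of_forall fun N => ha.trans_le (by positivity)
    have hlo := hy 0 τ le_rfl hτ0 hτ.2.le
    rw [sub_zero] at hlo
    filter_upwards [(tendsto_order.1 hlo).1 a ha] with N hN
    refine hN.trans_le ?_
    gcongr ?_ / _
    exact_mod_cast card_le_card (monotone_filter_right _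
      fun n _ (h : Int.fract (y n) ∈ Set.Ico 0 τ) => h.2.le)
  · obtain ⟨b', hτb', hb'⟩ := exists_between (lt_min hb hτ.2)
    have hhi := hy 0 b' le_rfl (hτ.1.trans_lt hτb') (hb'.trans_le (min_le_right _ _)).le
    rw [sub_zero] at hhi
    filter_upwards [(tendsto_order.1 hhi).2 b (hb'.trans_le (min_le_left _ _))] with N hN
    refine lt_of_le_of_lt ?_ hN
    gcongr ?_ / _
    exact_mod_cast card_le_card (monotone_filter_right _ fun n _ (h : Int.fract (y n) ≤ τ) =>
      (⟨Int.fract_nonneg _, h.trans_lt hτb'⟩ : Int.fract (y n) ∈ Set.Ico 0 b'))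

theorem UDMod1.benfordSeq {x : ℕ → ℝ} (hx : ∀ n, x n ≠ 0)
    (h : UDMod1 fun n => Real.logb 10 |x n|) : BenfordSeq x :=
  (benfordSeq_iff_tendsto_card_fract_logb_le hx).2 fun _ hτ => h.tendsto_card_fract_le hτ

theorem not_benfordSeq_of_finite_range_fract_logb {x : ℕ → ℝ} (hx : ∀ n, x n ≠ 0)
    (hfin : (Set.range fun n => Int.fract (Real.logb 10 |x n|)).Finite) : ¬ BenfordSeq x := by
  rw [benfordSeq_iff_tendsto_card_fract_logb_le hx]
  intro hB
  obtain ⟨τ₂, hτ₂, hτ₂F⟩ := (Set.Ioo_infinite (zero_lt_one' ℝ)).exists_notMem_finite hfin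
  obtain ⟨τ₁, hτ₁, hgap⟩ :=
    exists_Ioc_subset_of_mem_nhds' (hfin.isClosed.isOpen_compl.mem_nhds hτ₂F) hτ₂.1
  have hsame : ∀ n, Int.fract (Real.logb 10 |x n|) ≤ τ₁ ↔ Int.fract (Real.logb 10 |x n|) ≤ τ₂ :=
    fun n => ⟨fun h => h.trans hτ₁.2.le, fun h => not_lt.mp fun h₁ => hgap ⟨h₁, h⟩ ⟨n, rfl⟩⟩
  refine hτ₁.2.ne (tendsto_nhds_unique (hB τ₁ ⟨hτ₁.1, hτ₁.2.trans hτ₂.2⟩) ?_)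
  simpa only [hsame] using hB τ₂ ⟨hτ₂.1.le, hτ₂.2⟩

theorem finite_range_fract_natCast_mul_add_ratCast (u : ℚ) (β : ℝ) :
    (Set.range fun n : ℕ => Int.fract (n * (u : ℝ) + β)).Finite := by
  refine ((range u.den).finite_toSet.image fun n : ℕ => Int.fract (n * (u : ℝ) + β)).subset ?_
  rintro _ ⟨n, rfl⟩
  refine ⟨n % u.den, mem_range.mpr (Nat.mod_lt n u.pos), ?_⟩
  have hperiod : (n : ℝ) * u = (n % u.den : ℕ) * u + (((n / u.den : ℕ) * u.num : ℤ) : ℝ) := by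
    have hnum : (u.num : ℝ) = u * u.den := by rw [Rat.cast_def]; field_simp
    rw [Int.cast_mul, Int.cast_natCast, hnum]
    nth_rewrite 1 [← Nat.mod_add_div n u.den]
    rw [Nat.cast_add, Nat.cast_mul]
    ring
  simp only [hperiod, add_right_comm _ (((n / u.den : ℕ) * u.num : ℤ) : ℝ), Int.fract_add_intCast]

theorem benfordSeq_const_mul_pow_iff {c r : ℝ} (hc : c ≠ 0) (hr : r ≠ 0) :
    BenfordSeq (fun n => c * r ^ n) ↔ Irrational (Real.logb 10 |r|) := by
  have hx : ∀ n : ℕ, c * r ^ n ≠ 0 := fun n => mul_ne_zero hc (pow_ne_zero n hr)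
  have hlog : ∀ n : ℕ, Real.logb 10 |c * r ^ n| = n * Real.logb 10 |r| + Real.logb 10 |c| := by
    intro n
    rw [abs_mul, Real.logb_mul (by positivity) (by positivity), abs_pow, Real.logb_pow]
    ring
  constructor
  · rintro hB ⟨u, hu⟩
    refine not_benfordSeq_of_finite_range_fract_logb hx ?_ hB
    simpa only [hlog, ← hu] using finite_range_fract_natCast_mul_add_ratCast u (Real.logb 10 |c|)
  · intro hirr
    exact UDMod1.benfordSeq hx (by simpa only [hlog] using udMod1_natCast_mul_add hirr _)

theorem IsIdempotentElem.pow_add_smul_one_sub {R A : Type*} [CommRing R] [Ring A] [Algebra R A]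
    {e : A} (he : IsIdempotentElem e) (c : R) (n : ℕ) :
    (e + c • (1 - e)) ^ n = e + c ^ n • (1 - e) := by
  induction n with
  | zero => simp
  | succ n ih =>
    rw [pow_succ, ih, add_mul, mul_add, mul_add, smul_mul_assoc, mul_smul_comm, smul_mul_assoc,
      mul_smul_comm, smul_smul, he.eq, he.mul_one_sub_self, he.one_sub_mul_self, he.one_sub.eq,
      smul_zero, smul_zero, add_zero, zero_add, pow_succ]

theorem tendsto_pow_apply_of_pow_eq {d : ℕ} {P Q E : Matrix (Fin d) (Fin d) ℝ} {μ : ℝ}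
    (hpow : ∀ n : ℕ, P ^ n = Q + μ ^ n • E) (hμ : |μ| < 1) (i j : Fin d) :
    Tendsto (fun n : ℕ => (P ^ n) i j) atTop (𝓝 (Q i j)) := by
  simpa [hpow] using ((tendsto_pow_atTop_nhds_zero_of_abs_lt_one hμ).mul_const (E i j)).const_add
    (Q i j)

theorem matrixBenford_iff_of_pow_eq {d : ℕ} [NeZero d] {P Q E : Matrix (Fin d) (Fin d) ℝ} {μ : ℝ}
    (hpow : ∀ n : ℕ, P ^ n = Q + μ ^ n • E) (hE : ∀ i j, E i j ≠ 0) (hμ0 : μ ≠ 0) (hμ1 : μ ≠ 1) :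
    MatrixBenford P Q ↔ Irrational (Real.logb 10 |μ|) := by
  have hdev : ∀ i j, (fun n : ℕ => (P ^ n) i j - Q i j) = fun n => E i j * μ ^ n := fun i j => by
    ext n
    simp [hpow, mul_comm]
  have hstep : ∀ i j, (fun n : ℕ => (P ^ (n + 1)) i j - (P ^ n) i j) =
      fun n => (E i j * (μ - 1)) * μ ^ n := fun i j => by
    ext n
    simp only [hpow, Matrix.add_apply, Matrix.smul_apply, smul_eq_mul, pow_succ]
    ring
  have hE' : ∀ i j, E i j * (μ - 1) ≠ 0 := fun i j => mul_ne_zero (hE i j) (sub_ne_zero.mpr hμ1)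
  have hnz : ∀ c ≠ 0, ¬ EventuallyZero (fun n => c * μ ^ n) := fun c hc ⟨N, hN⟩ =>
    mul_ne_zero hc (pow_ne_zero N hμ0) (hN N le_rfl)
  constructor
  · intro h
    rcases (h 0 0).1 with hB | hZ
    · rw [hdev] at hB
      exact (benfordSeq_const_mul_pow_iff (hE 0 0) hμ0).mp hB
    · rw [hdev] at hZ
      exact absurd hZ (hnz _ (hE 0 0))
  · intro h i j
    rw [hdev, hstep]
    exact ⟨.inl ((benfordSeq_const_mul_pow_iff (hE i j) hμ0).mpr h),
      .inl ((benfordSeq_const_mul_pow_iff (hE' i j) hμ0).mpr h)⟩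

noncomputable def twoStateLimit (x y : ℝ) : Matrix (Fin 2) (Fin 2) ℝ :=
  (x + y)⁻¹ • !![y, x; y, x]

theorem isIdempotentElem_twoStateLimit {x y : ℝ} (h : x + y ≠ 0) :
    IsIdempotentElem (twoStateLimit x y) := by
  rw [IsIdempotentElem, twoStateLimit, smul_mul_smul_comm, Matrix.mul_fin_two]
  ext i j
  fin_cases i <;> fin_cases j <;> simp <;> field_simp <;> ring

theorem twoState_eq_add_smul {x y : ℝ} (h : x + y ≠ 0) :
    !![1 - x, x; y, 1 - y] = twoStateLimit x y + (1 - x - y) • (1 - twoStateLimit x y) := by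
  ext i j
  fin_cases i <;> fin_cases j <;> simp [twoStateLimit] <;> field_simp <;> ring

theorem one_sub_twoStateLimit_apply_ne_zero {x y : ℝ} (hx : x ≠ 0) (hy : y ≠ 0) (h : x + y ≠ 0)
    (i j : Fin 2) : (1 - twoStateLimit x y) i j ≠ 0 := by
  fin_cases i <;> fin_cases j <;>
    simp [twoStateLimit, h, hx, hy, sub_eq_zero, eq_comm (a := (1 : ℝ)), inv_mul_eq_one₀ h]

theorem twoState_pow {x y : ℝ} (h : x + y ≠ 0) (n : ℕ) :
    !![1 - x, x; y, 1 - y] ^ n = twoStateLimit x y + (1 - x - y) ^ n • (1 - twoStateLimit x y) := by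
  rw [twoState_eq_add_smul h]
  exact (isIdempotentElem_twoStateLimit h).pow_add_smul_one_sub _ n

/-- the general 2×2 case; `P` is Benford iff `log₁₀ |1 - x - y|` is irrational. -/
theorem two_state_benford_iff (x y : ℝ) (hx : x ∈ Set.Ioo (0 : ℝ) 1)
    (hy : y ∈ Set.Ioo (0 : ℝ) 1) (hxy : x + y ≠ 1) :
    RowStochastic !![1 - x, x; y, 1 - y] ∧
    Primitive !![1 - x, x; y, 1 - y] ∧
    ∀ Pstar : Matrix (Fin 2) (Fin 2) ℝ,
      (∀ i j, Tendsto (fun n : ℕ => (!![1 - x, x; y, 1 - y] ^ n) i j) atTop (𝓝 (Pstar i j))) →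
      (MatrixBenford !![1 - x, x; y, 1 - y] Pstar ↔
        Irrational (Real.logb 10 |1 - x - y|)) := by
  obtain ⟨hx0, hx1⟩ := hx
  obtain ⟨hy0, hy1⟩ := hy
  have hs : x + y ≠ 0 := by positivity
  refine ⟨⟨fun i j => ?_, fun i => ?_⟩, ⟨1, one_pos, fun i j => ?_⟩, fun Pstar hPstar => ?_⟩
  · fin_cases i <;> fin_cases j <;> simp <;> linarith
  · fin_cases i <;> simp [Fin.sum_univ_two]
  · fin_cases i <;> fin_cases j <;> simp <;> linarith
  have hμ : |1 - x - y| < 1 := abs_lt.mpr ⟨by linarith, by linarith⟩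
  obtain rfl : Pstar = twoStateLimit x y := Matrix.ext fun i j =>
    tendsto_nhds_unique (hPstar i j) (tendsto_pow_apply_of_pow_eq (twoState_pow hs) hμ i j)
  exact matrixBenford_iff_of_pow_eq (twoState_pow hs)
    (one_sub_twoStateLimit_apply_ne_zero hx0.ne' hy0.ne' hs)
    (fun h => hxy (by linarith)) (fun h => by linarith)
end

section
/- Let P be a d×d row-stochastic irreducible matrix with period p > 1, and let P* be the unique row-stochastic matrix satisfying P*·P = P*. Then for every index pair (i,j) there exists k ∈ {0,1,…,p−1} such that |(P^n − P*)^{(i,j)}| = (P*)^{(i,j)} > 0 for every n ∈ ℕ with n ≢ k (mod p); in particular, no component of the sequence (P^n − P*) is Benford or eventually zero, so P is not Benford. -/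
open Filter Topology MeasureTheory
open scoped Classical

/-
If `P^m i j > 0` and `P^n i j > 0` then `m ≡ n (mod p)`: closing both walks with one walk from `j`
back to `i` gives two return times to `i`, both multiples of `p`. So outside one residue class
`P^n i j = 0`, and `|P^n i j - P* i j|` is the constant `P* i j`, positive because `P* = P* P^n`
spreads the mass of any charged state to every state. The indices outside that class have lower
density `δ ≥ 1/3`, and on them the significand is the constant `s = S(P* i j)`: an atom, which the
continuous Benford distribution `t ↦ log₁₀ t` cannot have. Indeed the atom forces `log₁₀ s ≥ δ`,
and then `t = 10^(log₁₀ s - δ/2) ∈ [1, s)` would satisfy `log₁₀ t + δ ≤ log₁₀ s`.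
-/

open Finset

theorem mul_pow_eq_self_of_mul_eq_self {M : Type*} [Monoid M] {a b : M} (h : a * b = a) (n : ℕ) :
    a * b ^ n = a := by
  induction n with
  | zero => rw [pow_zero, mul_one]
  | succ n ih => rw [pow_succ, ← mul_assoc, ih, h]

section Chain

variable {ι : Type*} [Fintype ι]

theorem Matrix.mul_apply_pos_of_nonneg {A B : Matrix ι ι ℝ} (hA : ∀ i j, 0 ≤ A i j)
    (hB : ∀ i j, 0 ≤ B i j) {i j k : ι} (hij : 0 < A i j) (hjk : 0 < B j k) :
    0 < (A * B) i k :=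
  Finset.sum_pos' (fun l _ => mul_nonneg (hA i l) (hB l k)) ⟨j, mem_univ j, mul_pos hij hjk⟩

variable [DecidableEq ι] {P : Matrix ι ι ℝ}

theorem Matrix.pow_add_apply_pos (hP : ∀ i j, 0 ≤ P i j) {m n : ℕ} {i j k : ι}
    (hij : 0 < (P ^ m) i j) (hjk : 0 < (P ^ n) j k) : 0 < (P ^ (m + n)) i k := by
  rw [pow_add]
  exact mul_apply_pos_of_nonneg (pow_apply_nonneg hP m) (pow_apply_nonneg hP n) hij hjk

theorem Matrix.modEq_of_pow_apply_pos (hP : ∀ i j, 0 ≤ P i j)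
    (hirr : ∀ i j, ∃ n : ℕ, 0 < n ∧ 0 < (P ^ n) i j) {p : ℕ} {i : ι}
    (hperiod : ∀ n : ℕ, 0 < n → 0 < (P ^ n) i i → p ∣ n) {j : ι} {m n : ℕ}
    (hm : 0 < (P ^ m) i j) (hn : 0 < (P ^ n) i j) : m ≡ n [MOD p] := by
  obtain ⟨s, hs, hji⟩ := hirr j i
  have hm' := hperiod (m + s) (by omega) (pow_add_apply_pos hP hm hji)
  have hn' := hperiod (n + s) (by omega) (pow_add_apply_pos hP hn hji)
  exact Nat.ModEq.add_right_cancel' s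
    ((Nat.modEq_zero_iff_dvd.2 hm').trans (Nat.modEq_zero_iff_dvd.2 hn').symm)

theorem Matrix.pow_apply_eq_zero_of_not_modEq (hP : ∀ i j, 0 ≤ P i j)
    (hirr : ∀ i j, ∃ n : ℕ, 0 < n ∧ 0 < (P ^ n) i j) {p : ℕ} {i : ι}
    (hperiod : ∀ n : ℕ, 0 < n → 0 < (P ^ n) i i → p ∣ n) {j : ι} {n₀ n : ℕ}
    (hn₀ : 0 < (P ^ n₀) i j) (hn : ¬ n ≡ n₀ [MOD p]) : (P ^ n) i j = 0 :=
  (pow_apply_nonneg hP n i j).eq_or_lt.elim Eq.symm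
    fun hpos => (hn (modEq_of_pow_apply_pos hP hirr hperiod hpos hn₀)).elim

end Chain

section Stochastic

variable {d : ℕ} {P Q : Matrix (Fin d) (Fin d) ℝ}

theorem RowStochastic.exists_pos (hQ : RowStochastic Q) (i : Fin d) : ∃ j, 0 < Q i j := by
  obtain ⟨j, -, hj⟩ := exists_lt_of_sum_lt (s := univ) (f := 0) (g := Q i) (by simp [hQ.2 i])
  exact ⟨j, hj⟩

theorem RowStochastic.apply_pos_of_mul_eq_self (hQ : RowStochastic Q) (hP : ∀ i j, 0 ≤ P i j)
    (hirr : ∀ i j, ∃ n : ℕ, 0 < n ∧ 0 < (P ^ n) i j) (hfix : Q * P = Q) (i j : Fin d) :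
    0 < Q i j := by
  obtain ⟨l, hl⟩ := hQ.exists_pos i
  obtain ⟨n, -, hlj⟩ := hirr l j
  rw [← mul_pow_eq_self_of_mul_eq_self hfix n]
  exact Matrix.mul_apply_pos_of_nonneg hQ.1 (Matrix.pow_apply_nonneg hP n) hl hlj

end Stochastic

theorem signif_mem_Ico {c : ℝ} (hc : 0 < c) : signif c ∈ Set.Ico 1 10 := by
  have hfloor : ⌊Real.logb 10 c⌋ = Int.log 10 c := by
    exact_mod_cast Real.floor_logb_natCast (b := 10) hc.le
  have hlow : (10 : ℝ) ^ Int.log 10 c ≤ c := by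
    exact_mod_cast Int.zpow_log_le_self (b := 10) (by norm_num) hc
  have hhigh : c < (10 : ℝ) ^ (Int.log 10 c + 1) := by
    exact_mod_cast Int.lt_zpow_succ_log_self (b := 10) (by norm_num) c
  have hpos : (0 : ℝ) < 10 ^ Int.log 10 c := by positivity
  rw [zpow_add_one₀ (by norm_num)] at hhigh
  rw [signif, if_neg hc.ne', hfloor, Set.mem_Ico, le_div_iff₀ hpos, div_lt_iff₀ hpos]
  constructor <;> linarith

theorem card_filter_mod_eq_le (N k p : ℕ) :
    #{n ∈ Icc 1 N | n % p = k} ≤ N / p + 1 := by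
  calc #{n ∈ Icc 1 N | n % p = k}
      ≤ #((range (N / p + 1)).image fun q => q * p + k) := by
        refine card_le_card fun n hn => ?_
        simp only [mem_filter, mem_Icc] at hn
        refine mem_image.2
          ⟨n / p, mem_range.2 (Nat.lt_succ_of_le (Nat.div_le_div_right hn.1.2)), ?_⟩
        rw [← hn.2, Nat.div_add_mod']
    _ ≤ N / p + 1 := card_image_le.trans (card_range _).le

theorem eventually_le_card_filter_mod_ne_div {p : ℕ} (hp : 1 < p) (k : ℕ) :
    ∀ᶠ N : ℕ in atTop, (1 / 3 : ℝ) ≤ (#{n ∈ Icc 1 N | n % p ≠ k} : ℝ) / N := by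
  filter_upwards [eventually_ge_atTop 6] with N hN
  have hsplit := card_filter_add_card_filter_not (s := Icc 1 N) (p := fun n => n % p = k)
  have hclass := card_filter_mod_eq_le N k p
  have hdiv : N / p ≤ N / 2 := Nat.div_le_div_left hp (by norm_num)
  simp only [← ne_eq, Nat.card_Icc, add_tsub_cancel_right] at hsplit
  have hcount : N ≤ 3 * #{n ∈ Icc 1 N | n % p ≠ k} := by omega
  rw [le_div_iff₀ (by positivity)]
  have : (N : ℝ) ≤ 3 * #{n ∈ Icc 1 N | n % p ≠ k} := by exact_mod_cast hcount
  linarith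

theorem frequently_mod_ne {p : ℕ} (hp : 1 < p) (k : ℕ) : ∃ᶠ n in atTop, n % p ≠ k :=
  (Nat.frequently_modEq (n := p) (by omega) (k + 1)).mono fun n hn hnk => by
    have hk : k < p := hnk ▸ Nat.mod_lt n (by omega)
    unfold Nat.ModEq at hn
    rcases Nat.lt_or_ge (k + 1) p with hk1 | hk1
    · rw [Nat.mod_eq_of_lt hk1] at hn; omega
    · rw [show k + 1 = p by omega, Nat.mod_self] at hn; omega

theorem not_eventuallyZero_of_abs_eq {x : ℕ → ℝ} {A : ℕ → Prop} {c : ℝ} (hc : 0 < c)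
    (hA : ∃ᶠ n in atTop, A n)
    (hx : ∀ n, A n → 0 < n → |x n| = c) : ¬ EventuallyZero x := by
  rintro ⟨N, hN⟩
  obtain ⟨n, hAn, hn⟩ := (hA.and_eventually (eventually_ge_atTop (N + 1))).exists
  have := hx n hAn (by omega)
  rw [hN n (by omega), abs_zero] at this
  exact hc.ne this

section Benford

variable {x : ℕ → ℝ} {A : ℕ → Prop} [DecidablePred A] {δ s : ℝ}

theorem BenfordSeq.le_logb_of_signif_eq (hB : BenfordSeq x) (hs : s ∈ Set.Ico 1 10)
    (hA : ∀ᶠ N : ℕ in atTop, δ ≤ (#{n ∈ Icc 1 N | A n} : ℝ) / N)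
    (hx : ∀ n, A n → 0 < n → signif |x n| = s) : δ ≤ Real.logb 10 s := by
  refine ge_of_tendsto (hB s hs.1 hs.2) (hA.mono fun N hN => hN.trans ?_)
  refine div_le_div_of_nonneg_right (Nat.cast_le.2 (card_le_card fun n hn => ?_)) N.cast_nonneg
  simp only [mem_filter, mem_Icc] at hn ⊢
  exact ⟨hn.1, (hx n hn.2 (by omega)).le⟩

theorem BenfordSeq.logb_add_le_of_signif_eq (hB : BenfordSeq x) (hs : s < 10) {t : ℝ}
    (ht : 1 ≤ t) (hts : t < s)
    (hA : ∀ᶠ N : ℕ in atTop, δ ≤ (#{n ∈ Icc 1 N | A n} : ℝ) / N)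
    (hx : ∀ n, A n → 0 < n → signif |x n| = s) : Real.logb 10 t + δ ≤ Real.logb 10 s := by
  have hcard : ∀ N : ℕ, #{n ∈ Icc 1 N | signif |x n| ≤ t} + #{n ∈ Icc 1 N | A n} ≤
      #{n ∈ Icc 1 N | signif |x n| ≤ s} := by
    intro N
    rw [← card_union_of_disjoint]
    · refine card_le_card (union_subset (monotone_filter_right _ fun n _ hn => hn.trans hts.le)
        fun n hn => ?_)
      simp only [mem_filter, mem_Icc] at hn ⊢
      exact ⟨hn.1, (hx n hn.2 (by omega)).le⟩
    · refine disjoint_filter.2 fun n hn hnt hnA => ?_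
      rw [hx n hnA (mem_Icc.1 hn).1] at hnt
      linarith
  refine le_of_tendsto_of_tendsto ((hB t ht (hts.trans hs)).add_const δ)
    (hB s (ht.trans hts.le) hs) ?_
  filter_upwards [hA] with N hN
  calc (#{n ∈ Icc 1 N | signif |x n| ≤ t} : ℝ) / N + δ
      ≤ (#{n ∈ Icc 1 N | signif |x n| ≤ t} : ℝ) / N + (#{n ∈ Icc 1 N | A n} : ℝ) / N := by
        gcongr
    _ ≤ (#{n ∈ Icc 1 N | signif |x n| ≤ s} : ℝ) / N := by
        rw [← add_div]
        exact div_le_div_of_nonneg_right (by exact_mod_cast hcard N) N.cast_nonneg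

theorem not_benfordSeq_of_abs_eq {c : ℝ} (hc : 0 < c) (hδ : 0 < δ)
    (hA : ∀ᶠ N : ℕ in atTop, δ ≤ (#{n ∈ Icc 1 N | A n} : ℝ) / N)
    (hx : ∀ n, A n → 0 < n → |x n| = c) : ¬ BenfordSeq x := by
  intro hB
  have hs := signif_mem_Ico hc
  have hxs : ∀ n, A n → 0 < n → signif |x n| = signif c := fun n hAn hn => by rw [hx n hAn hn]
  have hδs := hB.le_logb_of_signif_eq hs hA hxs
  set t := (10 : ℝ) ^ (Real.logb 10 (signif c) - δ / 2)
  have ht : 1 ≤ t := Real.one_le_rpow (by norm_num) (by linarith)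
  have hts : t < signif c := by
    calc t < (10 : ℝ) ^ Real.logb 10 (signif c) :=
          Real.rpow_lt_rpow_of_exponent_lt (by norm_num) (by linarith)
      _ = signif c := Real.rpow_logb (by norm_num) (by norm_num) (by linarith [hs.1])
  have := hB.logb_add_le_of_signif_eq hs.2 ht hts hA hxs
  rw [Real.logb_rpow (by norm_num) (by norm_num)] at this
  linarith

end Benford

theorem periodic_chain_not_benford_general (d : ℕ) (hd : 1 < d) (P : Matrix (Fin d) (Fin d) ℝ)
    (hP : RowStochastic P)
    (hirr : ∀ i j, ∃ n : ℕ, 0 < n ∧ 0 < (P ^ n) i j)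
    (p : ℕ) (hp : 1 < p)
    (hperiod : ∀ i : Fin d,
      (∀ n : ℕ, 0 < n → 0 < (P ^ n) i i → p ∣ n) ∧
      (∀ q : ℕ, (∀ n : ℕ, 0 < n → 0 < (P ^ n) i i → q ∣ n) → q ∣ p))
    (Pstar : Matrix (Fin d) (Fin d) ℝ) (hPs : RowStochastic Pstar)
    (hfix : Pstar * P = Pstar) :
    (∀ i j, ∃ k : ℕ, k < p ∧ 0 < Pstar i j ∧
      ∀ n : ℕ, 0 < n → n % p ≠ k → |(P ^ n) i j - Pstar i j| = Pstar i j) ∧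
    (∀ i j, ¬ BenfordSeq (fun n => (P ^ n) i j - Pstar i j) ∧
      ¬ EventuallyZero (fun n => (P ^ n) i j - Pstar i j)) ∧
    ¬ MatrixBenford P Pstar := by
  have hPstar := hPs.apply_pos_of_mul_eq_self hP.1 hirr hfix
  have hcycle : ∀ i j, ∃ k : ℕ, k < p ∧ 0 < Pstar i j ∧
      ∀ n : ℕ, 0 < n → n % p ≠ k → |(P ^ n) i j - Pstar i j| = Pstar i j := by
    intro i j
    obtain ⟨n₀, -, hn₀⟩ := hirr i j
    refine ⟨n₀ % p, Nat.mod_lt _ (by omega), hPstar i j, fun n _ hn => ?_⟩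
    rw [Matrix.pow_apply_eq_zero_of_not_modEq hP.1 hirr (hperiod i).1 hn₀ hn, zero_sub, abs_neg,
      abs_of_pos (hPstar i j)]
  have hnot : ∀ i j, ¬ BenfordSeq (fun n => (P ^ n) i j - Pstar i j) ∧
      ¬ EventuallyZero (fun n => (P ^ n) i j - Pstar i j) := by
    intro i j
    obtain ⟨k, -, hc, hk⟩ := hcycle i j
    have hx : ∀ n, n % p ≠ k → 0 < n → |(P ^ n) i j - Pstar i j| = Pstar i j :=
      fun n hn hn0 => hk n hn0 hn
    exact ⟨not_benfordSeq_of_abs_eq hc (by norm_num) (eventually_le_card_filter_mod_ne_div hp k) hx,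
      not_eventuallyZero_of_abs_eq hc (frequently_mod_ne hp k) hx⟩
  refine ⟨hcycle, hnot, fun hB => ?_⟩
  obtain ⟨h, -⟩ := hB ⟨0, by omega⟩ ⟨0, by omega⟩
  exact h.elim (hnot _ _).1 (hnot _ _).2

/-- an irreducible stochastic matrix with period `p > 1` is not Benford.
Here irreducibility is `∀ i j, ∃ n ≥ 1, (P^n) i j > 0`, the period `p` is characterized as
the gcd (in the divisibility order) of the return times of each state, and `Pstar` is the
unique row-stochastic matrix with `Pstar * P = Pstar`. -/
theorem periodic_chain_not_benford (d : ℕ) (hd : 1 < d) (P : Matrix (Fin d) (Fin d) ℝ)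
    (hP : RowStochastic P)
    (hirr : ∀ i j, ∃ n : ℕ, 0 < n ∧ 0 < (P ^ n) i j)
    (p : ℕ) (hp : 1 < p)
    (hperiod : ∀ i : Fin d,
      (∀ n : ℕ, 0 < n → 0 < (P ^ n) i i → p ∣ n) ∧
      (∀ q : ℕ, (∀ n : ℕ, 0 < n → 0 < (P ^ n) i i → q ∣ n) → q ∣ p))
    (Pstar : Matrix (Fin d) (Fin d) ℝ) (hPs : RowStochastic Pstar)
    (hfix : Pstar * P = Pstar)
    (huniq : ∀ Q : Matrix (Fin d) (Fin d) ℝ, RowStochastic Q → Q * P = Q → Q = Pstar) :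
    (∀ i j, ∃ k : ℕ, k < p ∧ 0 < Pstar i j ∧
      ∀ n : ℕ, 0 < n → n % p ≠ k → |(P ^ n) i j - Pstar i j| = Pstar i j) ∧
    (∀ i j, ¬ BenfordSeq (fun n => (P ^ n) i j - Pstar i j) ∧
      ¬ EventuallyZero (fun n => (P ^ n) i j - Pstar i j)) ∧
    ¬ MatrixBenford P Pstar :=
  periodic_chain_not_benford_general d hd P hP hirr p hp hperiod Pstar hPs hfix
end
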